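/- arXiv:2210.01577 — 6 statements merged into one kernel-verified Lean document; each statement's English description precedes it below -/
import Mathlib

section
/- For n ≥ 2, the group G_n has exactly 2n + 1 elements of order 2, namely x^{2n} and the elements y x^{2s} for s ∈ {0, 1, …, 2n-1}. -/
set_option linter.unusedVariables false


open Multiplicative

namespace QD

/-- Monoid hom out of `Multiplicative (ZMod m)` from an element whose `m`-th power is 1. -/
def zmodHom {M : Type*} [Group M] (m : ℕ) (g : M) (h : g ^ m = 1) :
    Multiplicative (ZMod m) →* M :=
  AddMonoidHom.toMultiplicativeLeft
    (ZMod.lift m ⟨zmultiplesHom (Additive M) (Additive.ofMul g), by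
      show (m : ℤ) • Additive.ofMul g = 0
      rw [← ofMul_zpow, zpow_natCast, h]; rfl⟩)

lemma zmodHom_natCast {M : Type*} [Group M] (m : ℕ) (g : M) (h : g ^ m = 1) (k : ℕ) :
    zmodHom m g h (ofAdd ((k : ℕ) : ZMod m)) = g ^ k := by
  have h2 : ((k : ℕ) : ZMod m) = ((k : ℤ) : ZMod m) := by push_cast; rfl
  rw [zmodHom, h2]
  simp only [AddMonoidHom.coe_toMultiplicativeLeft, Function.comp_apply, toAdd_ofAdd,
    ZMod.lift_coe, zmultiplesHom_apply, ← ofMul_zpow, toMul_ofMul, zpow_natCast]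

lemma zmodHom_one' {M : Type*} [Group M] (m : ℕ) (g : M) (h : g ^ m = 1) :
    zmodHom m g h (ofAdd 1) = g := by
  have := zmodHom_natCast m g h 1
  simpa using this

lemma zmodHom_ext {m : ℕ} [NeZero m] {M : Type*} [Monoid M]
    {F1 F2 : Multiplicative (ZMod m) →* M} (h : F1 (ofAdd 1) = F2 (ofAdd 1)) : F1 = F2 := by
  refine MonoidHom.ext fun a => ?_
  have ha : a = (ofAdd (1 : ZMod m)) ^ ((a.toAdd).val) := by
    rw [← ofAdd_nsmul, nsmul_eq_mul, mul_one, ZMod.natCast_val, ZMod.cast_id]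
    exact (ofAdd_toAdd a).symm
  rw [ha, map_pow, map_pow, h]



/-- The ring element `2n - 1` of `ZMod (4n)`. -/
def rr (n : ℕ) : ZMod (4 * n) := 2 * n - 1

lemma rr_mul_self (n : ℕ) : rr n * rr n = 1 := by
  have h : ((4 * n : ℕ) : ZMod (4 * n)) = 0 := ZMod.natCast_self _
  push_cast at h
  unfold rr
  linear_combination ((n : ZMod (4 * n)) - 1) * h

/-- Multiplication by `2n-1` as an automorphism. -/
def sigma (n : ℕ) : MulAut (Multiplicative (ZMod (4 * n))) :=
  AddEquiv.toMultiplicative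
    { toFun := fun a => rr n * a
      invFun := fun a => rr n * a
      left_inv := fun a => by show rr n * (rr n * a) = a; rw [← mul_assoc, rr_mul_self, one_mul]
      right_inv := fun a => by show rr n * (rr n * a) = a; rw [← mul_assoc, rr_mul_self, one_mul]
      map_add' := fun a b => mul_add _ _ _ }

lemma sigma_apply (n : ℕ) (a : Multiplicative (ZMod (4 * n))) :
    sigma n a = ofAdd (rr n * a.toAdd) := rfl

lemma sigma_sq (n : ℕ) : sigma n ^ 2 = 1 := by
  ext a
  show sigma n (sigma n a) = a
  rw [sigma_apply, sigma_apply, toAdd_ofAdd, ← mul_assoc, rr_mul_self, one_mul]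
  exact ofAdd_toAdd a

/-- The action of `ZMod 2` on `ZMod (4n)`. -/
def phi (n : ℕ) : Multiplicative (ZMod 2) →* MulAut (Multiplicative (ZMod (4 * n))) :=
  zmodHom 2 (sigma n) (sigma_sq n)

/-- The concrete model of the generalized quasi-dihedral group. -/
abbrev H (n : ℕ) : Type :=
  SemidirectProduct (Multiplicative (ZMod (4 * n))) (Multiplicative (ZMod 2)) (phi n)

lemma phi_one' (n : ℕ) : phi n (ofAdd 1) = sigma n := zmodHom_one' _ _ _


end QD

/-- Relations of the generalized quasi-dihedral group
`G_n = ⟨x, y : x^(4n) = y^2 = 1, y x y = x^(2n-1)⟩`. -/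
def qdRel (n : ℕ) : Set (FreeGroup (Fin 2)) :=
  { FreeGroup.of 0 ^ (4 * n),
    FreeGroup.of 1 ^ 2,
    FreeGroup.of 1 * FreeGroup.of 0 * FreeGroup.of 1 * (FreeGroup.of 0 ^ (2 * n - 1))⁻¹ }

/-- The generalized quasi-dihedral group of order `8n`. -/
def G (n : ℕ) : Type := PresentedGroup (qdRel n)

instance (n : ℕ) : Group (G n) := by unfold G; infer_instance

/-- The generator `x` of `G n`. -/
def x (n : ℕ) : G n := PresentedGroup.of 0

/-- The generator `y` of `G n`. -/
def y (n : ℕ) : G n := PresentedGroup.of 1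

namespace QD
section T3
open Multiplicative SemidirectProduct

lemma cast_two_n_sub_one (n : ℕ) (hn : 1 ≤ n) : ((2 * n - 1 : ℕ) : ZMod (4 * n)) = rr n := by
  have h1 : 1 ≤ 2 * n := by omega
  unfold rr
  push_cast [Nat.cast_sub h1]
  ring

lemma m2_cases : ∀ z : Multiplicative (ZMod 2), z = ofAdd 0 ∨ z = ofAdd 1 := by decide

lemma m2_inv : ∀ z : Multiplicative (ZMod 2), z⁻¹ = z := by decide

/-- images of the generators in the concrete model -/
def gens (n : ℕ) : Fin 2 → H n
  | 0 => inl (ofAdd 1)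
  | 1 => inr (ofAdd 1)

lemma ofAdd_one_pow (m k : ℕ) : (ofAdd (1 : ZMod m)) ^ k = ofAdd ((k : ℕ) : ZMod m) := by
  rw [← ofAdd_nsmul, nsmul_eq_mul, mul_one]

lemma relations_hold (n : ℕ) (hn : 2 ≤ n) : ∀ r ∈ qdRel n, FreeGroup.lift (gens n) r = 1 := by
  intro r hr
  simp only [qdRel, Set.mem_insert_iff, Set.mem_singleton_iff] at hr
  rcases hr with rfl | rfl | rfl
  · rw [map_pow, FreeGroup.lift_apply_of]
    show (inl (ofAdd 1) : H n) ^ (4 * n) = 1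
    rw [← map_pow, ofAdd_one_pow, ZMod.natCast_self]
    simp
  · rw [map_pow, FreeGroup.lift_apply_of]
    show (inr (ofAdd 1) : H n) ^ 2 = 1
    rw [← map_pow, ofAdd_one_pow, ZMod.natCast_self]
    simp
  · simp only [map_mul, map_inv, map_pow, FreeGroup.lift_apply_of]
    show (inr (ofAdd 1) : H n) * inl (ofAdd 1) * inr (ofAdd 1) *
        ((inl (ofAdd 1) : H n) ^ (2 * n - 1))⁻¹ = 1
    rw [← map_pow, ofAdd_one_pow, cast_two_n_sub_one n (by omega)]
    have : (inr (ofAdd 1) : H n) * inl (ofAdd 1) * inr (ofAdd 1) = inl (ofAdd (rr n)) := by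
      have h2 : (inr (ofAdd 1) : H n) * inl (ofAdd 1) * inr (ofAdd 1)
          = inr (ofAdd 1) * inl (ofAdd 1) * inr (ofAdd 1)⁻¹ := by rw [m2_inv]
      rw [h2, ← inl_aut, phi_one', sigma_apply, toAdd_ofAdd, mul_one]
    rw [this, mul_inv_cancel]

/-- The forward homomorphism. -/
def fwd (n : ℕ) (hn : 2 ≤ n) : G n →* H n := PresentedGroup.toGroup (relations_hold n hn)

lemma fwd_x (n : ℕ) (hn : 2 ≤ n) : fwd n hn (x n) = inl (ofAdd 1) := PresentedGroup.toGroup.of _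
lemma fwd_y (n : ℕ) (hn : 2 ≤ n) : fwd n hn (y n) = inr (ofAdd 1) := PresentedGroup.toGroup.of _

lemma mk_rel_one {n : ℕ} {r : FreeGroup (Fin 2)} (hr : r ∈ qdRel n) :
    PresentedGroup.mk (qdRel n) r = 1 :=
  (QuotientGroup.eq_one_iff r).2 (Subgroup.subset_normalClosure hr)

lemma x_pow (n : ℕ) : x n ^ (4 * n) = 1 := by
  have := mk_rel_one (n := n) (Or.inl rfl)
  rwa [map_pow] at this

lemma y_sq (n : ℕ) : y n ^ 2 = 1 := by
  have := mk_rel_one (n := n) (Or.inr (Or.inl rfl))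
  rwa [map_pow] at this

lemma yxy (n : ℕ) : y n * x n * y n = x n ^ (2 * n - 1) := by
  have := mk_rel_one (n := n) (Or.inr (Or.inr rfl))
  rw [map_mul, map_mul, map_mul, map_inv, map_pow] at this
  exact eq_of_mul_inv_eq_one this

lemma y_inv (n : ℕ) : (y n)⁻¹ = y n := by
  have := y_sq n
  rw [pow_two] at this
  exact inv_eq_of_mul_eq_one_left this

end T3

lemma yxyinv (n : ℕ) : y n * x n * (y n)⁻¹ = x n ^ (2 * n - 1) := by
  rw [y_inv]; exact yxy n

/-- The backward homomorphism. -/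
def bwd (n : ℕ) (hn : 2 ≤ n) : H n →* G n :=
  SemidirectProduct.lift (zmodHom (4 * n) (x n) (x_pow n)) (zmodHom 2 (y n) (y_sq n))
    (by
      intro g
      haveI : NeZero (4 * n) := ⟨by omega⟩
      rcases m2_cases g with rfl | rfl
      · have h1 : (ofAdd (0 : ZMod 2)) = 1 := rfl
        rw [h1, map_one, map_one]
        ext a
        simp
      · apply zmodHom_ext
        simp only [MonoidHom.comp_apply, MulEquiv.coe_toMonoidHom]
        rw [phi_one', sigma_apply, toAdd_ofAdd, mul_one, ← cast_two_n_sub_one n (by omega),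
          zmodHom_natCast, zmodHom_one', zmodHom_one', MulAut.conj_apply, yxyinv])

lemma bwd_inl (n : ℕ) (hn : 2 ≤ n) (a : Multiplicative (ZMod (4 * n))) :
    bwd n hn (SemidirectProduct.inl a) = zmodHom (4 * n) (x n) (x_pow n) a := by
  simp [bwd]

lemma bwd_inr (n : ℕ) (hn : 2 ≤ n) (a : Multiplicative (ZMod 2)) :
    bwd n hn (SemidirectProduct.inr a) = zmodHom 2 (y n) (y_sq n) a := by
  simp [bwd]

/-- The isomorphism between the presented group and the concrete model. -/
def e (n : ℕ) (hn : 2 ≤ n) : G n ≃* H n :=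
  MonoidHom.toMulEquiv (fwd n hn) (bwd n hn)
    (by
      apply PresentedGroup.ext
      intro i
      fin_cases i
      · show bwd n hn (fwd n hn (x n)) = x n
        rw [fwd_x, bwd_inl, zmodHom_one']
      · show bwd n hn (fwd n hn (y n)) = y n
        rw [fwd_y, bwd_inr, zmodHom_one'])
    (by
      haveI : NeZero (4 * n) := ⟨by omega⟩
      apply SemidirectProduct.hom_ext
      · apply zmodHom_ext
        simp only [MonoidHom.comp_apply, MonoidHom.id_comp]
        rw [bwd_inl, zmodHom_one', fwd_x]
      · apply zmodHom_ext
        simp only [MonoidHom.comp_apply, MonoidHom.id_comp]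
        rw [bwd_inr, zmodHom_one', fwd_y])


section Count
open Multiplicative SemidirectProduct

lemma L1 (n : ℕ) (hn : 2 ≤ n) (c : ZMod (4 * n)) (h : c + c = 0) :
    c = 0 ∨ c = ((2 * n : ℕ) : ZMod (4 * n)) := by
  haveI : NeZero (4 * n) := ⟨by omega⟩
  have hv : c = ((c.val : ℕ) : ZMod (4 * n)) := (ZMod.natCast_zmod_val c).symm
  rw [hv, ← Nat.cast_add, ZMod.natCast_eq_zero_iff] at h
  have hlt := ZMod.val_lt c
  obtain ⟨k, hk⟩ := h
  have hk2 : 4 * n * k < 4 * n * 2 := by omega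
  have hklt : k < 2 := lt_of_mul_lt_mul_left hk2 (by omega)
  interval_cases k
  · left; rw [hv, show c.val = 0 by omega]; exact Nat.cast_zero
  · right; rw [hv]; congr 1; omega

lemma L2 (n : ℕ) (hn : 2 ≤ n) (c : ZMod (4 * n)) :
    ((2 * n : ℕ) : ZMod (4 * n)) * c = 0 ↔ 2 ∣ c.val := by
  haveI : NeZero (4 * n) := ⟨by omega⟩
  have hv : c = ((c.val : ℕ) : ZMod (4 * n)) := (ZMod.natCast_zmod_val c).symm
  constructor
  · intro h
    rw [hv, ← Nat.cast_mul, ZMod.natCast_eq_zero_iff] at h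
    obtain ⟨k, hk⟩ := h
    have : c.val = 2 * k := by
      have h2 : (2 * n) * c.val = (2 * n) * (2 * k) := by ring_nf; ring_nf at hk; omega
      exact Nat.eq_of_mul_eq_mul_left (by omega) h2
    exact ⟨k, this⟩
  · rintro ⟨k, hk⟩
    rw [hv, hk, ← Nat.cast_mul, ZMod.natCast_eq_zero_iff]
    exact ⟨k, by ring⟩

lemma L3 (n : ℕ) (hn : 2 ≤ n) (c : ZMod (4 * n)) :
    c + rr n * c = ((2 * n : ℕ) : ZMod (4 * n)) * c := by
  unfold rr
  push_cast
  ring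

lemma orderTwo_H (n : ℕ) (hn : 2 ≤ n) :
    {h : H n | orderOf h = 2} =
      insert (inl (ofAdd ((2 * n : ℕ) : ZMod (4 * n))))
        ((fun s : ℕ => (inr (ofAdd 1) : H n) * inl (ofAdd ((2 * s : ℕ) : ZMod (4 * n)))) ''
          {s : ℕ | s < 2 * n}) := by
  haveI : NeZero (4 * n) := ⟨by omega⟩
  have h4 : ((4 * n : ℕ) : ZMod (4 * n)) = 0 := ZMod.natCast_self _
  have m2sq : ∀ z : Multiplicative (ZMod 2), z * z = 1 := by decide
  have crit : ∀ h : H n, orderOf h = 2 ↔ h * h = 1 ∧ h ≠ 1 := by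
    intro h
    constructor
    · intro ho
      refine ⟨?_, ?_⟩
      · have := pow_orderOf_eq_one h; rw [ho, pow_two] at this; exact this
      · rintro rfl; simp at ho
    · rintro ⟨hs, h1⟩
      exact orderOf_eq_prime (by rwa [pow_two]) h1
  ext h
  simp only [Set.mem_setOf_eq, Set.mem_insert_iff, Set.mem_image, crit]
  constructor
  · rintro ⟨hsq, hne⟩
    have hleft : h.left * (phi n h.right) h.left = 1 := by
      have := congrArg SemidirectProduct.left hsq
      simpa using this
    rcases m2_cases h.right with hr | hr
    · -- h.right = ofAdd 0
      left
      have hphi : phi n h.right = 1 := by rw [hr]; exact map_one _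
      rw [hphi] at hleft
      simp only [MulAut.one_apply] at hleft
      have hc : h.left.toAdd + h.left.toAdd = 0 := by
        have := congrArg Multiplicative.toAdd hleft
        simpa using this
      rcases L1 n hn _ hc with h0 | h0
      · exfalso
        apply hne
        ext
        · simpa using h0
        · simpa using hr
      · ext
        · simpa using h0
        · simpa using hr
    · -- h.right = ofAdd 1
      right
      rw [hr, phi_one', sigma_apply] at hleft
      have hc : h.left.toAdd + rr n * h.left.toAdd = 0 := by
        have := congrArg Multiplicative.toAdd hleft
        simpa using this
      rw [L3 n hn] at hc
      set c := h.left.toAdd with hcdef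
      have hc2 : ((2 * n : ℕ) : ZMod (4 * n)) * (rr n * c) = 0 := by
        rw [show ((2 * n : ℕ) : ZMod (4 * n)) * (rr n * c) = rr n * (((2 * n : ℕ) : ZMod (4 * n)) * c) by ring, hc, mul_zero]
      obtain ⟨k, hk⟩ := (L2 n hn _).1 hc2
      refine ⟨k, ?_, ?_⟩
      · have := ZMod.val_lt (rr n * c)
        omega
      · ext
        · show (1 : Multiplicative (ZMod (4*n))) * (phi n (ofAdd 1)) (ofAdd ((2 * k : ℕ) : ZMod (4 * n))) = h.left
          rw [one_mul, phi_one', sigma_apply, toAdd_ofAdd]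
          have : ((2 * k : ℕ) : ZMod (4 * n)) = rr n * c := by
            rw [← hk, ZMod.natCast_zmod_val]
          rw [this, ← mul_assoc, rr_mul_self, one_mul]
          exact ofAdd_toAdd h.left
        · show (ofAdd 1 : Multiplicative (ZMod 2)) * 1 = h.right
          rw [mul_one, hr]
  · rintro (rfl | ⟨s, hs, rfl⟩)
    · constructor
      · rw [← map_mul, ← ofAdd_add, ← Nat.cast_add]
        have : ((2 * n + 2 * n : ℕ) : ZMod (4 * n)) = 0 := by
          rw [show 2 * n + 2 * n = 4 * n by ring, h4]
        rw [this]
        simp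
      · intro hcon
        have := congrArg SemidirectProduct.left hcon
        simp only [left_inl, one_left] at this
        have := congrArg Multiplicative.toAdd this
        simp only [toAdd_ofAdd, toAdd_one] at this
        rw [ZMod.natCast_eq_zero_iff] at this
        have := Nat.le_of_dvd (by omega) this
        omega
    · set X := (inr (ofAdd 1) : H n) * inl (ofAdd ((2 * s : ℕ) : ZMod (4 * n))) with hX
      have hXl : X.left = (phi n (ofAdd 1)) (ofAdd ((2 * s : ℕ) : ZMod (4 * n))) := by
        rw [hX]; simp
      have hXr : X.right = ofAdd 1 := by rw [hX]; simp
      constructor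
      · ext
        · show (X * X).left = (1 : H n).left
          rw [mul_left, hXl, hXr, one_left]
          rw [phi_one', sigma_apply, sigma_apply]
          rw [← ofAdd_add]
          simp only [toAdd_ofAdd]
          have : rr n * ((2 * s : ℕ) : ZMod (4 * n)) + rr n * (rr n * ((2 * s : ℕ) : ZMod (4 * n))) = 0 := by
            rw [← mul_assoc, rr_mul_self, one_mul, add_comm, L3 n hn, ← Nat.cast_mul,
              show 2 * n * (2 * s) = 4 * n * s by ring, Nat.cast_mul, h4, zero_mul]
          rw [this, ofAdd_zero]
        · show (X * X).right = (1 : H n).right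
          rw [mul_right, hXr, one_right, m2sq]
      · intro hcon
        have := congrArg SemidirectProduct.right hcon
        rw [hXr, one_right] at this
        exact absurd this (by decide)

end Count


lemma e_x (n : ℕ) (hn : 2 ≤ n) : e n hn (x n) = SemidirectProduct.inl (Multiplicative.ofAdd 1) :=
  fwd_x n hn

lemma e_y (n : ℕ) (hn : 2 ≤ n) : e n hn (y n) = SemidirectProduct.inr (Multiplicative.ofAdd 1) :=
  fwd_y n hn

end QD

open QD Multiplicative SemidirectProduct in
theorem stmt5_aux (n : ℕ) (hn : 2 ≤ n) :
    {g : G n | orderOf g = 2} =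
      insert (x n ^ (2 * n)) ((fun s : ℕ => y n * x n ^ (2 * s)) '' {s : ℕ | s < 2 * n}) ∧
    Nat.card {g : G n | orderOf g = 2} = 2 * n + 1 := by
  haveI : NeZero (4 * n) := ⟨by omega⟩
  set E := e n hn with hE
  have hhead : E (x n ^ (2 * n)) = inl (ofAdd ((2 * n : ℕ) : ZMod (4 * n))) := by
    rw [map_pow, e_x, ← map_pow, ofAdd_one_pow]
  have himg : ∀ s : ℕ, E (y n * x n ^ (2 * s)) =
      inr (ofAdd 1) * inl (ofAdd ((2 * s : ℕ) : ZMod (4 * n))) := by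
    intro s
    rw [map_mul, map_pow, e_x, e_y, ← map_pow, ofAdd_one_pow]
  have hset : {g : G n | orderOf g = 2} =
      insert (x n ^ (2 * n)) ((fun s : ℕ => y n * x n ^ (2 * s)) '' {s : ℕ | s < 2 * n}) := by
    ext g
    simp only [Set.mem_setOf_eq, Set.mem_insert_iff, Set.mem_image]
    rw [← MulEquiv.orderOf_eq E g]
    have hmem := Set.ext_iff.1 (orderTwo_H n hn) (E g)
    simp only [Set.mem_setOf_eq, Set.mem_insert_iff, Set.mem_image] at hmem
    rw [hmem]
    constructor
    · rintro (h1 | ⟨s, hs, h2⟩)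
      · left; apply E.injective; rw [hhead, h1]
      · right; exact ⟨s, hs, E.injective (by rw [himg s, h2])⟩
    · rintro (rfl | ⟨s, hs, rfl⟩)
      · left; exact hhead
      · right; exact ⟨s, hs, (himg s).symm⟩
  refine ⟨hset, ?_⟩
  rw [hset, Nat.card_coe_set_eq]
  have hfin : ((fun s : ℕ => y n * x n ^ (2 * s)) '' {s : ℕ | s < 2 * n}).Finite :=
    (Set.finite_Iio (2 * n)).image _
  have hnotmem : x n ^ (2 * n) ∉ (fun s : ℕ => y n * x n ^ (2 * s)) '' {s : ℕ | s < 2 * n} := by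
    rintro ⟨s, hs, hEq⟩
    have := congrArg E hEq
    rw [himg s, hhead] at this
    have hr := congrArg SemidirectProduct.right this
    simp only [mul_right, right_inl, right_inr, mul_one, one_mul] at hr
    exact absurd hr (by decide)
  have hinj : Set.InjOn (fun s : ℕ => y n * x n ^ (2 * s)) {s : ℕ | s < 2 * n} := by
    intro s hs t ht hEq
    simp only [Set.mem_setOf_eq] at hs ht
    have := congrArg E hEq
    rw [himg s, himg t] at this
    have h2 := mul_left_cancel this
    rw [inl_inj] at h2
    have h3 := congrArg Multiplicative.toAdd h2
    simp only [toAdd_ofAdd] at h3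
    have h4 := congrArg ZMod.val h3
    rw [ZMod.val_natCast_of_lt (by omega), ZMod.val_natCast_of_lt (by omega)] at h4
    omega
  rw [Set.ncard_insert_of_notMem hnotmem hfin, Set.ncard_image_of_injOn hinj]
  have : {s : ℕ | s < 2 * n} = ↑(Finset.range (2 * n)) := by
    ext s; simp
  rw [this, Set.ncard_coe_finset, Finset.card_range]

theorem stmt5 (n : ℕ) (hn : 2 ≤ n) :
    {g : G n | orderOf g = 2} =
      insert (x n ^ (2 * n)) ((fun s : ℕ => y n * x n ^ (2 * s)) '' {s : ℕ | s < 2 * n}) ∧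
    Nat.card {g : G n | orderOf g = 2} = 2 * n + 1 :=
  stmt5_aux n hn
end

section
/- For n ≥ 2, the group G_n has exactly three subgroups of index two: the cyclic subgroup ⟨x⟩ of order 4n, the dihedral subgroup ⟨x^2, y⟩ of order 4n, and the dicyclic subgroup ⟨x^2, yx⟩ of order 4n. -/
namespace QDP

variable {n : ℕ}

lemma mk_rel {r : FreeGroup (Fin 2)} (h : r ∈ qdRel n) :
    PresentedGroup.mk (qdRel n) r = 1 := by
  have hmem : r ∈ Subgroup.normalClosure (qdRel n) := Subgroup.subset_normalClosure h
  exact (QuotientGroup.eq_one_iff r).mpr hmem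

lemma hx4n : x n ^ (4 * n) = 1 := by
  have := mk_rel (n := n) (show FreeGroup.of 0 ^ (4 * n) ∈ qdRel n by simp [qdRel])
  rwa [map_pow] at this

lemma hy2 : y n ^ 2 = 1 := by
  have := mk_rel (n := n) (show FreeGroup.of 1 ^ 2 ∈ qdRel n by simp [qdRel])
  rwa [map_pow] at this

lemma hyxy : y n * x n * y n = x n ^ (2 * n - 1) := by
  have := mk_rel (n := n)
    (show FreeGroup.of 1 * FreeGroup.of 0 * FreeGroup.of 1 *
      (FreeGroup.of 0 ^ (2 * n - 1))⁻¹ ∈ qdRel n by simp [qdRel])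
  rw [map_mul, map_mul, map_mul, map_inv, map_pow, mul_inv_eq_one] at this
  exact this

lemma y_inv : (y n)⁻¹ = y n := by
  have := hy2 (n := n)
  rw [pow_two] at this
  exact inv_eq_of_mul_eq_one_right this

lemma yx : y n * x n = x n ^ (2 * n - 1) * y n := by
  have h := hyxy (n := n)
  calc y n * x n = (y n * x n * y n) * (y n)⁻¹ := by group
    _ = x n ^ (2 * n - 1) * y n := by rw [h, y_inv]

lemma yxk (k : ℕ) : y n * x n ^ k = x n ^ ((2 * n - 1) * k) * y n := by
  induction k with
  | zero => simp
  | succ k ih =>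
    rw [pow_succ, ← mul_assoc, ih, mul_assoc, yx, ← mul_assoc, ← pow_add,
      Nat.mul_succ]

lemma ypow (j : ℕ) : y n ^ j = y n ^ (j % 2) := by
  conv_lhs => rw [← Nat.div_add_mod j 2]
  rw [pow_add, pow_mul, hy2, one_pow, one_mul]

lemma xpow (hn : n ≠ 0) (i : ℕ) : x n ^ i = x n ^ (i % (4 * n)) := by
  conv_lhs => rw [← Nat.div_add_mod i (4 * n)]
  rw [pow_add, pow_mul, hx4n, one_pow, one_mul]

/-- move a power of y past a power of x -/
lemma swap (j k : ℕ) : ∃ k' : ℕ, y n ^ j * x n ^ k = x n ^ k' * y n ^ j := by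
  rcases Nat.even_or_odd j with he | ho
  · refine ⟨k, ?_⟩
    obtain ⟨t, rfl⟩ := he
    have : y n ^ (t + t) = 1 := by
      rw [← two_mul, pow_mul, hy2, one_pow]
    rw [this, one_mul, mul_one]
  · refine ⟨(2 * n - 1) * k, ?_⟩
    have hj : y n ^ j = y n := by
      rw [ypow, Nat.odd_iff.mp ho, pow_one]
    rw [hj, yxk]

lemma x_inv (hn : n ≠ 0) : (x n)⁻¹ = x n ^ (4 * n - 1) := by
  apply inv_eq_of_mul_eq_one_right
  rw [← pow_succ']
  have : 4 * n - 1 + 1 = 4 * n := by omega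
  rw [this, hx4n]

/-- normal form: every element is x^i y^j -/
lemma normal_form (hn : n ≠ 0) (g : G n) : ∃ i j : ℕ, g = x n ^ i * y n ^ j := by
  let S : Subgroup (G n) :=
    { carrier := {g | ∃ i j : ℕ, g = x n ^ i * y n ^ j}
      one_mem' := ⟨0, 0, by simp⟩
      mul_mem' := by
        rintro a b ⟨i, j, rfl⟩ ⟨k, l, rfl⟩
        obtain ⟨k', hk'⟩ := swap (n := n) j k
        exact ⟨i + k', j + l, by
          rw [mul_assoc, ← mul_assoc (y n ^ j), hk', pow_add, pow_add]; group⟩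
      inv_mem' := by
        rintro a ⟨i, j, rfl⟩
        rw [mul_inv_rev, ← inv_pow, ← inv_pow, y_inv, x_inv hn, ← pow_mul]
        obtain ⟨k', hk'⟩ := swap (n := n) j ((4 * n - 1) * i)
        exact ⟨k', j, hk'⟩ }
  exact PresentedGroup.generated_by (qdRel n) S (fun j => by
    fin_cases j
    · exact ⟨1, 0, by simp [x]; exact (pow_one _).symm⟩
    · exact ⟨0, 1, by simp [y]; exact (pow_one _).symm⟩) g




/-- the multiplier 2n-1 (or 1 for n = 0) -/
def uu (n : ℕ) : ZMod (4 * n) := if n = 0 then 1 else ((2 * n - 1 : ℕ) : ZMod (4 * n))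

lemma uu_sq (n : ℕ) : uu n * uu n = 1 := by
  unfold uu
  by_cases h : n = 0
  · simp [h]
  · rw [if_neg h, ← Nat.cast_mul]
    have hkey : (2 * n - 1) * (2 * n - 1) = 4 * n * (n - 1) + 1 := by
      cases n with
      | zero => omega
      | succ m =>
        simp only [Nat.succ_sub_one, show 2 * (m + 1) - 1 = 2 * m + 1 from by omega]
        ring
    rw [hkey, Nat.cast_add, Nat.cast_mul, ZMod.natCast_self, zero_mul, zero_add,
      Nat.cast_one]

/-- the action exponent -/
def ee (n : ℕ) (b : ZMod 2) : ZMod (4 * n) := if b = 0 then 1 else uu n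

@[simp] lemma ee_zero (n : ℕ) : ee n 0 = 1 := by simp [ee]

lemma ee_add (n : ℕ) (b d : ZMod 2) : ee n (b + d) = ee n b * ee n d := by
  rcases (by decide : ∀ c : ZMod 2, c = 0 ∨ c = 1) b with rfl | rfl <;>
    rcases (by decide : ∀ c : ZMod 2, c = 0 ∨ c = 1) d with rfl | rfl <;>
    simp [ee, uu_sq, show ((1 : ZMod 2) + 1 = 0) from by decide]

lemma ee_sq (n : ℕ) (b : ZMod 2) : ee n b * ee n b = 1 := by
  rw [← ee_add]
  have : b + b = 0 := by fin_cases b <;> decide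
  simp [this]

/-- the concrete model of `G n` -/
@[ext] structure Cg (n : ℕ) where
  a : ZMod (4 * n)
  b : ZMod 2

instance : Mul (Cg n) := ⟨fun p q => ⟨p.a + ee n p.b * q.a, p.b + q.b⟩⟩
instance : One (Cg n) := ⟨⟨0, 0⟩⟩
instance : Inv (Cg n) := ⟨fun p => ⟨-(ee n p.b * p.a), p.b⟩⟩

variable {n : ℕ}

@[simp] lemma mul_a (p q : Cg n) : (p * q).a = p.a + ee n p.b * q.a := rfl
@[simp] lemma mul_b (p q : Cg n) : (p * q).b = p.b + q.b := rfl
@[simp] lemma one_a : (1 : Cg n).a = 0 := rfl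
@[simp] lemma one_b : (1 : Cg n).b = 0 := rfl
@[simp] lemma inv_a (p : Cg n) : (p⁻¹).a = -(ee n p.b * p.a) := rfl
@[simp] lemma inv_b (p : Cg n) : (p⁻¹).b = p.b := rfl

instance : Group (Cg n) where
  mul_assoc p q r := by
    ext
    · simp [ee_add]; ring
    · simp [add_assoc]
  one_mul p := by ext <;> simp
  mul_one p := by ext <;> simp
  inv_mul_cancel p := by
    ext
    · simp [← mul_assoc, ee_sq]
    · have h2 : ∀ c : ZMod 2, c + c = 0 := by decide
      simp [h2]



def X (n : ℕ) : Cg n := ⟨1, 0⟩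
def Y (n : ℕ) : Cg n := ⟨0, 1⟩

lemma Xpow (k : ℕ) : X n ^ k = ⟨(k : ZMod (4 * n)), 0⟩ := by
  induction k with
  | zero => ext <;> simp
  | succ k ih => rw [pow_succ, ih]; ext <;> simp [X]

lemma Ypow (k : ℕ) : Y n ^ k = ⟨0, (k : ZMod 2)⟩ := by
  induction k with
  | zero => ext <;> simp
  | succ k ih => rw [pow_succ, ih]; ext <;> simp [Y, ee]

lemma XmulY (a : ZMod (4 * n)) (b : ZMod 2) :
    (⟨a, 0⟩ : Cg n) * ⟨0, b⟩ = ⟨a, b⟩ := by ext <;> simp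

lemma YXY (hn : n ≠ 0) : Y n * X n * Y n = X n ^ (2 * n - 1) := by
  rw [Xpow]
  ext
  · simp [X, Y, ee, uu, hn]
  · simp [X, Y]; decide

/-- embedding of ZMod (4n) in Cg n -/
def jmap (n : ℕ) : Multiplicative (ZMod (4 * n)) →* Cg n :=
  MonoidHom.mk' (fun a => ⟨Multiplicative.toAdd a, 0⟩) (fun a b => by
    ext <;> simp)

lemma jmap_inj : Function.Injective (jmap n) := by
  intro a b h
  simpa [jmap, MonoidHom.mk'] using congrArg Cg.a h

lemma orderOf_X : orderOf (X n) = 4 * n := by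
  have : X n = jmap n (Multiplicative.ofAdd 1) := by ext <;> simp [X, jmap, MonoidHom.mk']
  rw [this, orderOf_injective (jmap n) jmap_inj, orderOf_ofAdd_eq_addOrderOf,
    ZMod.addOrderOf_one]

end QDP

namespace QDP

variable {n : ℕ}

lemma pi_rels (hn : n ≠ 0) : ∀ r ∈ qdRel n,
    FreeGroup.lift (fun i : Fin 2 => if i = 0 then X n else Y n) r = 1 := by
  intro r hr
  rcases hr with h | h | h
  · subst h
    simp [map_pow, Xpow, ZMod.natCast_self]
    ext <;> simp [Xpow]
  · subst h
    simp [map_pow, Ypow]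
    ext <;> simp [Ypow]; decide
  · simp only [Set.mem_singleton_iff] at h
    subst h
    simp only [map_mul, map_inv, map_pow, FreeGroup.lift_apply_of, if_pos rfl,
      reduceIte]
    rw [mul_inv_eq_one]
    simpa using YXY hn

def piH (hn : n ≠ 0) : G n →* Cg n := PresentedGroup.toGroup (pi_rels hn)

@[simp] lemma piH_x (hn : n ≠ 0) : piH hn (x n) = X n := PresentedGroup.toGroup.of _
@[simp] lemma piH_y (hn : n ≠ 0) : piH hn (y n) = Y n := PresentedGroup.toGroup.of _

/-- parametrization of G n -/
def F (n : ℕ) (p : ZMod (4 * n) × ZMod 2) : G n := x n ^ p.1.val * y n ^ p.2.val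

lemma piH_F (hn : n ≠ 0) (p : ZMod (4 * n) × ZMod 2) :
    piH hn (F n p) = ⟨p.1, p.2⟩ := by
  haveI : NeZero (4 * n) := ⟨by omega⟩
  rw [F, map_mul, map_pow, map_pow, piH_x, piH_y, Xpow, Ypow, XmulY,
    ZMod.natCast_val, ZMod.natCast_val, ZMod.cast_id, ZMod.cast_id]

lemma F_surj (hn : n ≠ 0) : Function.Surjective (F n) := by
  haveI : NeZero (4 * n) := ⟨by omega⟩
  intro g
  obtain ⟨i, j, rfl⟩ := normal_form hn g
  refine ⟨((i : ZMod (4 * n)), (j : ZMod 2)), ?_⟩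
  rw [F, ZMod.val_natCast, ZMod.val_natCast, ← xpow hn, ← ypow]

lemma F_inj (hn : n ≠ 0) : Function.Injective (F n) := by
  intro p q h
  have := congrArg (piH hn) h
  rw [piH_F hn, piH_F hn] at this
  ext
  · exact congrArg Cg.a this
  · exact congrArg Cg.b this

lemma F_bij (hn : n ≠ 0) : Function.Bijective (F n) := ⟨F_inj hn, F_surj hn⟩

lemma finiteG (hn : n ≠ 0) : Finite (G n) := by
  haveI : NeZero (4 * n) := ⟨by omega⟩
  exact Finite.of_surjective (F n) (F_surj hn)

lemma cardG (hn : n ≠ 0) : Nat.card (G n) = 8 * n := by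
  haveI : NeZero (4 * n) := ⟨by omega⟩
  rw [← Nat.card_eq_of_bijective (F n) (F_bij hn), Nat.card_prod, Nat.card_zmod,
    Nat.card_zmod]
  ring

lemma piH_inj (hn : n ≠ 0) : Function.Injective (piH hn) := by
  intro u v h
  obtain ⟨p, rfl⟩ := F_surj hn u
  obtain ⟨q, rfl⟩ := F_surj hn v
  rw [piH_F hn, piH_F hn] at h
  exact congrArg (F n) (by
    ext
    · exact congrArg Cg.a h
    · exact congrArg Cg.b h)

lemma orderOf_x (hn : n ≠ 0) : orderOf (x n) = 4 * n := by
  rw [← orderOf_injective (piH hn) (piH_inj hn) (x n), piH_x, orderOf_X]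

lemma card_closure_x (hn : n ≠ 0) :
    Nat.card (Subgroup.closure {x n} : Subgroup (G n)) = 4 * n := by
  rw [← Subgroup.zpowers_eq_closure, Nat.card_zpowers, orderOf_x hn]

end QDP

namespace QDP

variable {n : ℕ}

lemma phi_rels (hn : n ≠ 0) (a b : ZMod 2) : ∀ r ∈ qdRel n,
    FreeGroup.lift (fun i : Fin 2 => if i = 0 then Multiplicative.ofAdd a
      else Multiplicative.ofAdd b) r = 1 := by
  intro r hr
  have h2 : ∀ c : ZMod 2, c + c = 0 := by decide
  rcases hr with h | h | h
  · subst h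
    rw [map_pow, FreeGroup.lift_apply_of, if_pos rfl, ← ofAdd_nsmul, ofAdd_eq_one,
      nsmul_eq_mul]
    rw [show ((4 * n : ℕ) : ZMod 2) = 0 from by
      rw [ZMod.natCast_eq_zero_iff]; omega, zero_mul]
  · subst h
    rw [map_pow, FreeGroup.lift_apply_of, if_neg (by decide), ← ofAdd_nsmul,
      ofAdd_eq_one, two_nsmul, h2]
  · simp only [Set.mem_singleton_iff] at h
    subst h
    rw [map_mul, map_mul, map_mul, map_inv, map_pow, FreeGroup.lift_apply_of,
      FreeGroup.lift_apply_of, if_pos rfl, if_neg (show (1 : Fin 2) ≠ 0 by decide),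
      ← ofAdd_nsmul, nsmul_eq_mul]
    rw [show ((2 * n - 1 : ℕ) : ZMod 2) = 1 from by
      rw [← ZMod.natCast_mod]
      norm_num [show (2 * n - 1) % 2 = 1 from by omega], one_mul]
    fin_cases a <;> fin_cases b <;> decide

def phi (hn : n ≠ 0) (a b : ZMod 2) : G n →* Multiplicative (ZMod 2) :=
  PresentedGroup.toGroup (phi_rels hn a b)

@[simp] lemma phi_x (hn : n ≠ 0) (a b : ZMod 2) :
    phi hn a b (x n) = Multiplicative.ofAdd a := PresentedGroup.toGroup.of _

@[simp] lemma phi_y (hn : n ≠ 0) (a b : ZMod 2) :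
    phi hn a b (y n) = Multiplicative.ofAdd b := PresentedGroup.toGroup.of _

lemma phi_nf (hn : n ≠ 0) (a b : ZMod 2) (i j : ℕ) :
    phi hn a b (x n ^ i * y n ^ j) =
      Multiplicative.ofAdd ((i : ZMod 2) * a + (j : ZMod 2) * b) := by
  rw [map_mul, map_pow, map_pow, phi_x, phi_y, ← ofAdd_nsmul, ← ofAdd_nsmul,
    ← ofAdd_add, nsmul_eq_mul, nsmul_eq_mul]

end QDP

namespace QDP

variable {n : ℕ}

lemma mem1 : x n ^ 2 ∈ ({x n ^ 2, y n} : Set (G n)) := Set.mem_insert _ _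
lemma mem2 : y n ∈ ({x n ^ 2, y n} : Set (G n)) := Set.mem_insert_of_mem _ rfl
lemma mem1' : x n ^ 2 ∈ ({x n ^ 2, y n * x n} : Set (G n)) := Set.mem_insert _ _
lemma mem2' : y n * x n ∈ ({x n ^ 2, y n * x n} : Set (G n)) :=
  Set.mem_insert_of_mem _ rfl

set_option maxHeartbeats 1000000 in
lemma ker_01 (hn : n ≠ 0) : (phi hn 0 1).ker = Subgroup.closure {x n} := by
  apply le_antisymm
  · intro g hg
    obtain ⟨i, j, rfl⟩ := normal_form hn g
    rw [MonoidHom.mem_ker, phi_nf, ofAdd_eq_one, mul_zero, zero_add, mul_one] at hg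
    obtain ⟨t, rfl⟩ := (ZMod.natCast_eq_zero_iff j 2).mp hg
    have h2t : y n ^ (2 * t) = 1 := by rw [pow_mul, hy2, one_pow]
    rw [h2t, mul_one]
    exact Subgroup.pow_mem _ (Subgroup.subset_closure (Set.mem_singleton _)) i
  · rw [Subgroup.closure_le, Set.singleton_subset_iff]
    simp [MonoidHom.mem_ker]

lemma ker_10 (hn : n ≠ 0) : (phi hn 1 0).ker = Subgroup.closure {x n ^ 2, y n} := by
  apply le_antisymm
  · intro g hg
    obtain ⟨i, j, rfl⟩ := normal_form hn g
    rw [MonoidHom.mem_ker, phi_nf, ofAdd_eq_one, mul_zero, add_zero, mul_one] at hg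
    obtain ⟨s, rfl⟩ := (ZMod.natCast_eq_zero_iff i 2).mp hg
    rw [pow_mul]
    exact mul_mem (Subgroup.pow_mem _ (Subgroup.subset_closure mem1) s)
      (Subgroup.pow_mem _ (Subgroup.subset_closure mem2) j)
  · rw [Subgroup.closure_le, Set.insert_subset_iff, Set.singleton_subset_iff]
    constructor
    · rw [SetLike.mem_coe, MonoidHom.mem_ker, map_pow, phi_x, ← ofAdd_nsmul,
        ofAdd_eq_one, two_nsmul]
      decide
    · simp [MonoidHom.mem_ker]

lemma ker_11 (hn : n ≠ 0) :
    (phi hn 1 1).ker = Subgroup.closure {x n ^ 2, y n * x n} := by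
  have hxy : x n * y n ∈ Subgroup.closure {x n ^ 2, y n * x n} := by
    have h : x n * y n = x n ^ 2 * ((y n * x n)⁻¹) := by
      rw [mul_inv_rev, y_inv]; group
    rw [h]
    exact mul_mem (Subgroup.subset_closure mem1')
      (inv_mem (Subgroup.subset_closure mem2'))
  apply le_antisymm
  · intro g hg
    obtain ⟨i, j, rfl⟩ := normal_form hn g
    rw [MonoidHom.mem_ker, phi_nf, ofAdd_eq_one, mul_one, mul_one, ← Nat.cast_add,
      ZMod.natCast_eq_zero_iff] at hg
    rcases Nat.even_or_odd j with he | ho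
    · obtain ⟨t, rfl⟩ := he
      have h2 : y n ^ (t + t) = 1 := by rw [← two_mul, pow_mul, hy2, one_pow]
      rw [h2, mul_one]
      obtain ⟨s, rfl⟩ : 2 ∣ i := by omega
      rw [pow_mul]
      exact Subgroup.pow_mem _ (Subgroup.subset_closure mem1') s
    · have hj : y n ^ j = y n := by rw [ypow, Nat.odd_iff.mp ho, pow_one]
      rw [hj]
      have hodd : Odd i := by
        rcases Nat.even_or_odd i with he' | ho'
        · exfalso; rcases he' with ⟨u, hu⟩; rcases ho with ⟨v, hv⟩; omega
        · exact ho'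
      obtain ⟨s, rfl⟩ := hodd
      rw [pow_add, pow_mul, pow_one, mul_assoc]
      exact mul_mem (Subgroup.pow_mem _ (Subgroup.subset_closure mem1') s) hxy
  · rw [Subgroup.closure_le, Set.insert_subset_iff, Set.singleton_subset_iff]
    constructor
    · rw [SetLike.mem_coe, MonoidHom.mem_ker, map_pow, phi_x, ← ofAdd_nsmul,
        ofAdd_eq_one, two_nsmul]
      decide
    · rw [SetLike.mem_coe, MonoidHom.mem_ker, map_mul, phi_x, phi_y, ← ofAdd_add,
        ofAdd_eq_one]
      decide

lemma range_phi_top (hn : n ≠ 0) (a b : ZMod 2)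
    (h : ∃ g, phi hn a b g = Multiplicative.ofAdd 1) : (phi hn a b).range = ⊤ := by
  rw [MonoidHom.range_eq_top]
  intro z
  have hz : z = Multiplicative.ofAdd 0 ∨ z = Multiplicative.ofAdd 1 := by
    revert z; decide
  rcases hz with rfl | rfl
  · exact ⟨1, by rw [map_one]; rfl⟩
  · exact h

lemma index_ker_phi (hn : n ≠ 0) (a b : ZMod 2)
    (h : ∃ g, phi hn a b g = Multiplicative.ofAdd 1) :
    (phi hn a b).ker.index = 2 := by
  rw [Subgroup.index_ker, range_phi_top hn a b h, Subgroup.card_top]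
  rw [Nat.card_congr Multiplicative.toAdd, Nat.card_zmod]

end QDP

namespace QDP

variable {n : ℕ}

lemma card_closure_pair_y (hn2 : 2 ≤ n) :
    Nat.card (Subgroup.closure {x n ^ 2, y n} : Subgroup (G n)) = 4 * n := by
  have hn : n ≠ 0 := by omega
  have hidx : (Subgroup.closure {x n ^ 2, y n} : Subgroup (G n)).index = 2 := by
    rw [← ker_10 hn]
    exact index_ker_phi hn 1 0 ⟨x n, by simp⟩
  have hm := Subgroup.card_mul_index (H := (Subgroup.closure {x n ^ 2, y n} : Subgroup (G n)))
  rw [hidx, cardG hn] at hm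
  omega

lemma card_closure_pair_yx (hn2 : 2 ≤ n) :
    Nat.card (Subgroup.closure {x n ^ 2, y n * x n} : Subgroup (G n)) = 4 * n := by
  have hn : n ≠ 0 := by omega
  have hidx : (Subgroup.closure {x n ^ 2, y n * x n} : Subgroup (G n)).index = 2 := by
    rw [← ker_11 hn]
    exact index_ker_phi hn 1 1 ⟨x n, by simp⟩
  have hm := Subgroup.card_mul_index
    (H := (Subgroup.closure {x n ^ 2, y n * x n} : Subgroup (G n)))
  rw [hidx, cardG hn] at hm
  omega

lemma index_closure_x (hn2 : 2 ≤ n) :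
    (Subgroup.closure {x n} : Subgroup (G n)).index = 2 := by
  have hn : n ≠ 0 := by omega
  have hm := Subgroup.card_mul_index (H := (Subgroup.closure {x n} : Subgroup (G n)))
  rw [card_closure_x hn, cardG hn] at hm
  have h2 : 4 * n * 2 = 8 * n := by ring
  exact Nat.eq_of_mul_eq_mul_left (by omega) (hm.trans h2.symm)

lemma isCyclic_closure_x : IsCyclic (Subgroup.closure {x n} : Subgroup (G n)) := by
  rw [← Subgroup.zpowers_eq_closure]
  refine ⟨⟨⟨x n, Subgroup.mem_zpowers _⟩, ?_⟩⟩
  rintro ⟨z, hz⟩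
  obtain ⟨k, rfl⟩ := hz
  refine ⟨k, ?_⟩
  apply Subtype.ext
  simp

end QDP

namespace QDP

variable {n : ℕ}

lemma ne_12 (hn : n ≠ 0) :
    (Subgroup.closure {x n} : Subgroup (G n)) ≠ Subgroup.closure {x n ^ 2, y n} := by
  intro h
  have hy : y n ∈ Subgroup.closure {x n ^ 2, y n} := Subgroup.subset_closure mem2
  rw [← h, ← ker_01 hn, MonoidHom.mem_ker, phi_y] at hy
  exact (by decide : (Multiplicative.ofAdd (1 : ZMod 2)) ≠ 1) hy

lemma ne_13 (hn : n ≠ 0) :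
    (Subgroup.closure {x n} : Subgroup (G n)) ≠ Subgroup.closure {x n ^ 2, y n * x n} := by
  intro h
  have hyx : y n * x n ∈ Subgroup.closure {x n ^ 2, y n * x n} :=
    Subgroup.subset_closure mem2'
  rw [← h, ← ker_01 hn, MonoidHom.mem_ker, map_mul, phi_x, phi_y] at hyx
  exact (by decide :
    (Multiplicative.ofAdd (1 : ZMod 2)) * Multiplicative.ofAdd (0 : ZMod 2) ≠ 1) hyx

lemma ne_23 (hn : n ≠ 0) :
    (Subgroup.closure {x n ^ 2, y n} : Subgroup (G n)) ≠
      Subgroup.closure {x n ^ 2, y n * x n} := by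
  intro h
  have hy : y n ∈ Subgroup.closure {x n ^ 2, y n} := Subgroup.subset_closure mem2
  rw [h, ← ker_11 hn, MonoidHom.mem_ker, phi_y] at hy
  exact (by decide : (Multiplicative.ofAdd (1 : ZMod 2)) ≠ 1) hy

lemma card_of_index_two (hn : n ≠ 0) {H : Subgroup (G n)} (h : H.index = 2) :
    Nat.card H = 4 * n := by
  have hm := Subgroup.card_mul_index (H := H)
  rw [h, cardG hn] at hm
  omega

lemma main_forward (hn2 : 2 ≤ n) (H : Subgroup (G n)) (h : H.index = 2) :
    H = Subgroup.closure {x n} ∨ H = Subgroup.closure {x n ^ 2, y n} ∨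
      H = Subgroup.closure {x n ^ 2, y n * x n} := by
  have hn : n ≠ 0 := by omega
  haveI := finiteG hn
  have hcardH : Nat.card H = 4 * n := card_of_index_two hn h
  have hx2 : x n ^ 2 ∈ H := Subgroup.sq_mem_of_index_two h (x n)
  by_cases hx : x n ∈ H
  · left
    refine (Subgroup.eq_of_le_of_card_ge ?_ ?_).symm
    · rw [Subgroup.closure_le, Set.singleton_subset_iff]; exact hx
    · rw [hcardH, card_closure_x hn]
  · by_cases hy : y n ∈ H
    · right; left
      refine (Subgroup.eq_of_le_of_card_ge ?_ ?_).symm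
      · rw [Subgroup.closure_le, Set.insert_subset_iff, Set.singleton_subset_iff]
        exact ⟨hx2, hy⟩
      · rw [hcardH, card_closure_pair_y hn2]
    · right; right
      have hyx : y n * x n ∈ H :=
        (Subgroup.mul_mem_iff_of_index_two h).mpr (iff_of_false hy hx)
      refine (Subgroup.eq_of_le_of_card_ge ?_ ?_).symm
      · rw [Subgroup.closure_le, Set.insert_subset_iff, Set.singleton_subset_iff]
        exact ⟨hx2, hyx⟩
      · rw [hcardH, card_closure_pair_yx hn2]

end QDP


theorem stmt6 (n : ℕ) (hn : 2 ≤ n) :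
    (∀ H : Subgroup (G n), H.index = 2 ↔
      H ∈ ({Subgroup.closure {x n},
            Subgroup.closure {x n ^ 2, y n},
            Subgroup.closure {x n ^ 2, y n * x n}} : Set (Subgroup (G n)))) ∧
    Subgroup.closure {x n} ≠ Subgroup.closure {x n ^ 2, y n} ∧
    Subgroup.closure {x n} ≠ Subgroup.closure {x n ^ 2, y n * x n} ∧
    Subgroup.closure {x n ^ 2, y n} ≠ Subgroup.closure {x n ^ 2, y n * x n} ∧
    Nat.card (Subgroup.closure {x n} : Subgroup (G n)) = 4 * n ∧
    Nat.card (Subgroup.closure {x n ^ 2, y n} : Subgroup (G n)) = 4 * n ∧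
    Nat.card (Subgroup.closure {x n ^ 2, y n * x n} : Subgroup (G n)) = 4 * n ∧
    IsCyclic (Subgroup.closure {x n} : Subgroup (G n)) := by
  have hn0 : n ≠ 0 := by omega
  refine ⟨?_, QDP.ne_12 hn0, QDP.ne_13 hn0, QDP.ne_23 hn0, QDP.card_closure_x hn0,
    QDP.card_closure_pair_y hn, QDP.card_closure_pair_yx hn, QDP.isCyclic_closure_x⟩
  intro H
  constructor
  · intro h
    simpa only [Set.mem_insert_iff, Set.mem_singleton_iff] using
      QDP.main_forward hn H h
  · intro h
    simp only [Set.mem_insert_iff, Set.mem_singleton_iff] at h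
    rcases h with rfl | rfl | rfl
    · exact QDP.index_closure_x hn
    · rw [← QDP.ker_10 hn0]
      exact QDP.index_ker_phi hn0 1 0 ⟨x n, by simp⟩
    · rw [← QDP.ker_11 hn0]
      exact QDP.index_ker_phi hn0 1 1 ⟨x n, by simp⟩
end

section
/- For n ≥ 2, the subgroup ⟨x^2, y⟩ of G_n is isomorphic to the dihedral group D_{4n} of order 4n, and it is the unique index-two subgroup of G_n containing all involutions of G_n. -/
namespace QDAux

/-- multiplier -/
def u (n : ℕ) (b : ZMod 2) : ZMod (4*n) := if b = 0 then 1 else 2*(n : ZMod (4*n)) - 1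

lemma h4n (n : ℕ) : (4:ZMod (4*n))*(n : ZMod (4*n)) = 0 := by
  have h := ZMod.natCast_self (4*n)
  push_cast at h
  exact h

lemma key (n : ℕ) : (2*(n : ZMod (4*n)) - 1) * (2*(n:ZMod (4*n)) - 1) = 1 := by
  linear_combination ((n : ZMod (4*n)) - 1) * h4n n

lemma zmod2_cases (b : ZMod 2) : b = 0 ∨ b = 1 := by revert b; decide

lemma zmod2_add_self (b : ZMod 2) : b + b = 0 := by revert b; decide

lemma u_zero (n : ℕ) : u n 0 = 1 := rfl

lemma u_one (n : ℕ) : u n 1 = 2*(n : ZMod (4*n)) - 1 := rfl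

lemma u_mul (n : ℕ) (b d : ZMod 2) : u n (b+d) = u n b * u n d := by
  rcases zmod2_cases b with rfl | rfl <;> rcases zmod2_cases d with rfl | rfl <;>
    simp [u, key n, show (1+1 : ZMod 2) = 0 from rfl]

lemma u_sq (n : ℕ) (b : ZMod 2) : u n b * u n b = 1 := by
  rw [← u_mul, zmod2_add_self]; rfl

@[ext] structure QD (n : ℕ) where
  a : ZMod (4*n)
  b : ZMod 2

namespace QD
variable {n : ℕ}

instance : Mul (QD n) := ⟨fun p q => ⟨p.a + u n p.b * q.a, p.b + q.b⟩⟩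
instance : One (QD n) := ⟨⟨0, 0⟩⟩
instance : Inv (QD n) := ⟨fun p => ⟨-(u n p.b * p.a), p.b⟩⟩

@[simp] lemma mul_a (p q : QD n) : (p*q).a = p.a + u n p.b * q.a := rfl
@[simp] lemma mul_b (p q : QD n) : (p*q).b = p.b + q.b := rfl
@[simp] lemma one_a : (1 : QD n).a = 0 := rfl
@[simp] lemma one_b : (1 : QD n).b = 0 := rfl
@[simp] lemma inv_a (p : QD n) : (p⁻¹).a = -(u n p.b * p.a) := rfl
@[simp] lemma inv_b (p : QD n) : (p⁻¹).b = p.b := rfl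

instance : Group (QD n) where
  mul_assoc p q r := by ext <;> simp [u_mul, add_assoc] <;> ring
  one_mul p := by ext <;> simp [u_zero]
  mul_one p := by ext <;> simp
  inv_mul_cancel p := by ext <;> simp [zmod2_add_self]

def X : QD n := ⟨1, 0⟩
def Y : QD n := ⟨0, 1⟩

lemma X_pow (k : ℕ) : (X : QD n)^k = ⟨(k : ZMod (4*n)), 0⟩ := by
  induction k with
  | zero => ext <;> simp
  | succ k ih => rw [pow_succ, ih]; ext <;> simp [X, u_zero]

lemma Y_pow (k : ℕ) : (Y : QD n)^k = ⟨0, (k : ZMod 2)⟩ := by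
  induction k with
  | zero => ext <;> simp
  | succ k ih => rw [pow_succ, ih]; ext <;> simp [Y]

end QD
end QDAux



namespace QDAux

lemma mk_rel {α : Type*} {rels : Set (FreeGroup α)} {r : FreeGroup α} (h : r ∈ rels) :
    PresentedGroup.mk rels r = 1 :=
  (QuotientGroup.eq_one_iff r).mpr (Subgroup.subset_normalClosure h)

variable (n : ℕ)

lemma relx : (x n)^(4*n) = 1 := by
  have h := mk_rel (rels := qdRel n) (Set.mem_insert _ _)
  rw [map_pow] at h
  exact h

lemma rely : (y n)^2 = 1 := by
  have h := mk_rel (rels := qdRel n) (Set.mem_insert_of_mem _ (Set.mem_insert _ _))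
  rw [map_pow] at h
  exact h

lemma relxy : y n * x n * y n = x n ^ (2*n - 1) := by
  have h := mk_rel (rels := qdRel n)
    (Set.mem_insert_of_mem _ (Set.mem_insert_of_mem _ rfl))
  rw [map_mul, map_mul, map_mul, map_inv, map_pow, mul_inv_eq_one] at h
  exact h

lemma y_mul_y : y n * y n = 1 := by rw [← sq]; exact rely n

lemma y_inv : (y n)⁻¹ = y n := inv_eq_of_mul_eq_one_right (y_mul_y n)

lemma y_x_pow (m : ℕ) : y n * (x n)^m * y n = (x n)^((2*n-1)*m) := by
  have h : (MulAut.conj (y n)) ((x n)^m) = ((MulAut.conj (y n)) (x n))^m := map_pow _ _ _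
  simp only [MulAut.conj_apply, y_inv n] at h
  rw [h, relxy n, ← pow_mul]

lemma y_x_pow' (m : ℕ) : y n * (x n)^m = (x n)^((2*n-1)*m) * y n := by
  conv_rhs => rw [← y_x_pow n m]
  rw [mul_assoc (y n * (x n)^m), y_mul_y n, mul_one]

lemma xpow_eq {k l : ℕ} (h : (k : ZMod (4*n)) = (l : ZMod (4*n))) : x n ^ k = x n ^ l := by
  have hm := (ZMod.natCast_eq_natCast_iff k l (4*n)).mp h
  rw [pow_eq_pow_mod k (relx n), pow_eq_pow_mod l (relx n), hm]

lemma ypow_eq {k l : ℕ} (h : (k : ZMod 2) = (l : ZMod 2)) : y n ^ k = y n ^ l := by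
  have hm := (ZMod.natCast_eq_natCast_iff k l 2).mp h
  rw [pow_eq_pow_mod k (rely n), pow_eq_pow_mod l (rely n), hm]

end QDAux

namespace QDAux

@[simp] lemma X_a (n : ℕ) : (QD.X : QD n).a = 1 := rfl
@[simp] lemma X_b (n : ℕ) : (QD.X : QD n).b = 0 := rfl
@[simp] lemma Y_a (n : ℕ) : (QD.Y : QD n).a = 0 := rfl
@[simp] lemma Y_b (n : ℕ) : (QD.Y : QD n).b = 1 := rfl

lemma cast_two_n_sub_one (n : ℕ) (hn : 2 ≤ n) :
    ((2*n-1 : ℕ) : ZMod (4*n)) = 2*(n:ZMod (4*n)) - 1 := by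
  have h1 : 1 ≤ 2*n := by omega
  push_cast [Nat.cast_sub h1]
  ring

def fgen (n : ℕ) : Fin 2 → QD n := ![QD.X, QD.Y]

lemma hrels (n : ℕ) (hn : 2 ≤ n) : ∀ r ∈ qdRel n, FreeGroup.lift (fgen n) r = 1 := by
  rintro r (rfl | rfl | rfl)
  · rw [map_pow, FreeGroup.lift_apply_of]
    show (QD.X : QD n)^(4*n) = 1
    rw [QD.X_pow]; ext <;> simp
  · rw [map_pow, FreeGroup.lift_apply_of]
    show (QD.Y : QD n)^2 = 1
    rw [QD.Y_pow]; ext <;> simp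
    decide
  · simp only [map_mul, map_inv, map_pow, FreeGroup.lift_apply_of]
    rw [mul_inv_eq_one]
    show QD.Y * QD.X * QD.Y = (QD.X : QD n)^(2*n-1)
    rw [QD.X_pow, cast_two_n_sub_one n hn]
    ext <;> simp [u_one, zmod2_add_self]

def phi (n : ℕ) (hn : 2 ≤ n) : G n →* QD n := PresentedGroup.toGroup (hrels n hn)

lemma phi_x (n : ℕ) (hn : 2 ≤ n) : phi n hn (x n) = QD.X := by
  exact PresentedGroup.toGroup.of (hrels n hn)

lemma phi_y (n : ℕ) (hn : 2 ≤ n) : phi n hn (y n) = QD.Y := by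
  exact PresentedGroup.toGroup.of (hrels n hn)

def psiF (n : ℕ) (p : QD n) : G n := x n ^ p.a.val * y n ^ p.b.val

lemma psiF_mul (n : ℕ) (hn : 2 ≤ n) (p q : QD n) :
    psiF n (p*q) = psiF n p * psiF n q := by
  haveI : NeZero (4*n) := ⟨by omega⟩
  unfold psiF
  rcases zmod2_cases p.b with hb | hb
  · simp only [QD.mul_a, QD.mul_b, hb, u_zero, one_mul, zero_add, ZMod.val_zero, pow_zero,
      mul_one]
    have hx : x n ^ ((p.a + q.a).val) = x n ^ (p.a.val + q.a.val) :=
      xpow_eq n (by push_cast [ZMod.natCast_val, ZMod.cast_id]; ring)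
    rw [hx, ← mul_assoc, ← pow_add]
  · simp only [QD.mul_a, QD.mul_b, hb, u_one]
    have hx : x n ^ ((p.a + (2*(n:ZMod (4*n))-1)*q.a).val)
        = x n ^ (p.a.val + (2*n-1)*q.a.val) :=
      xpow_eq n (by
        push_cast [ZMod.natCast_val, ZMod.cast_id, Nat.cast_sub (show 1 ≤ 2*n by omega)]
        ring)
    have hy : y n ^ ((1 + q.b).val) = y n ^ (1 + q.b.val) :=
      ypow_eq n (by push_cast [ZMod.natCast_val, ZMod.cast_id]; ring)
    have h1 : ((1:ZMod 2)).val = 1 := rfl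
    rw [hx, hy, h1, pow_one, pow_add, pow_add, pow_one]
    conv_rhs => rw [mul_assoc, ← mul_assoc (y n), y_x_pow' n q.a.val]
    group

end QDAux

namespace QDAux

def psi (n : ℕ) (hn : 2 ≤ n) : QD n →* G n := MonoidHom.mk' (psiF n) (psiF_mul n hn)

lemma psi_X (n : ℕ) (hn : 2 ≤ n) : psi n hn QD.X = x n := by
  haveI : Fact (1 < 4*n) := ⟨by omega⟩
  show x n ^ ((1 : ZMod (4*n)).val) * y n ^ ((0 : ZMod 2).val) = x n
  rw [ZMod.val_one, ZMod.val_zero, pow_one, pow_zero, mul_one]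

lemma psi_Y (n : ℕ) (hn : 2 ≤ n) : psi n hn QD.Y = y n := by
  show x n ^ ((0 : ZMod (4*n)).val) * y n ^ ((1 : ZMod 2).val) = y n
  rw [ZMod.val_zero, pow_zero, one_mul]
  rfl

lemma psi_apply (n : ℕ) (hn : 2 ≤ n) (p : QD n) :
    psi n hn p = x n ^ p.a.val * y n ^ p.b.val := rfl

lemma psi_phi (n : ℕ) (hn : 2 ≤ n) : ∀ g : G n, psi n hn (phi n hn g) = g := by
  have h : (psi n hn).comp (phi n hn) = MonoidHom.id (G n) := by
    refine PresentedGroup.ext fun i => ?_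
    match i with
    | 0 =>
      show psi n hn (phi n hn (x n)) = x n
      rw [phi_x, psi_X]
    | 1 =>
      show psi n hn (phi n hn (y n)) = y n
      rw [phi_y, psi_Y]
  intro g
  exact DFunLike.congr_fun h g

lemma phi_psi (n : ℕ) (hn : 2 ≤ n) : ∀ p : QD n, phi n hn (psi n hn p) = p := by
  haveI : NeZero (4*n) := ⟨by omega⟩
  intro p
  show phi n hn (x n ^ p.a.val * y n ^ p.b.val) = p
  rw [map_mul, map_pow, map_pow, phi_x, phi_y, QD.X_pow, QD.Y_pow]
  ext <;> simp [ZMod.natCast_val, ZMod.cast_id]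

def eqv (n : ℕ) (hn : 2 ≤ n) : G n ≃* QD n :=
  { toFun := phi n hn
    invFun := psi n hn
    left_inv := psi_phi n hn
    right_inv := phi_psi n hn
    map_mul' := map_mul (phi n hn) }

end QDAux

namespace QDAux

def K (n : ℕ) : Subgroup (QD n) where
  carrier := {p | ∃ c, p.a = 2*c}
  one_mem' := ⟨0, by simp⟩
  mul_mem' := by
    rintro p q ⟨c, hc⟩ ⟨d, hd⟩
    exact ⟨c + u n p.b * d, by simp only [QD.mul_a, hc, hd]; ring⟩
  inv_mem' := by
    rintro p ⟨c, hc⟩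
    exact ⟨-(u n p.b * c), by simp only [QD.inv_a, hc]; ring⟩

lemma mem_K (n : ℕ) (p : QD n) : p ∈ K n ↔ ∃ c, p.a = 2*c := Iff.rfl

lemma two_dvd_4n (n : ℕ) : (2:ℕ) ∣ 4*n := ⟨2*n, by ring⟩

lemma u_cast (n : ℕ) (b : ZMod 2) :
    (ZMod.castHom (two_dvd_4n n) (ZMod 2)) (u n b) = 1 := by
  rcases zmod2_cases b with rfl | rfl
  · rw [u_zero, map_one]
  · rw [u_one, map_sub, map_mul, map_one, map_ofNat, map_natCast]
    rw [show (2 : ZMod 2) = 0 from rfl, zero_mul, zero_sub]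
    decide

def pr (n : ℕ) : QD n →* Multiplicative (ZMod 2) :=
  MonoidHom.mk' (fun p => Multiplicative.ofAdd ((ZMod.castHom (two_dvd_4n n) (ZMod 2)) p.a))
    (by
      intro p q
      show Multiplicative.ofAdd ((ZMod.castHom (two_dvd_4n n) (ZMod 2)) ((p*q).a)) = _
      rw [← ofAdd_add]
      congr 1
      rw [QD.mul_a, map_add, map_mul, u_cast, one_mul])

lemma pr_apply (n : ℕ) (p : QD n) :
    pr n p = Multiplicative.ofAdd ((ZMod.castHom (two_dvd_4n n) (ZMod 2)) p.a) := rfl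

lemma pr_surj (n : ℕ) : Function.Surjective (pr n) := by
  intro m
  refine ⟨⟨((m.toAdd.val : ℕ) : ZMod (4*n)), 0⟩, ?_⟩
  rw [pr_apply]
  show Multiplicative.ofAdd ((ZMod.castHom (two_dvd_4n n) (ZMod 2)) ((m.toAdd.val : ℕ) : ZMod (4*n))) = m
  rw [map_natCast, ZMod.natCast_val, ZMod.cast_id]
  exact ofAdd_toAdd m

lemma ker_pr (n : ℕ) (hn : 2 ≤ n) : (pr n).ker = K n := by
  haveI : NeZero (4*n) := ⟨by omega⟩
  ext p
  rw [MonoidHom.mem_ker, mem_K, pr_apply, ofAdd_eq_one]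
  constructor
  · intro h
    rw [ZMod.castHom_apply, ← ZMod.natCast_val] at h
    obtain ⟨m, hm⟩ := (ZMod.natCast_eq_zero_iff _ _).mp h
    refine ⟨(m : ZMod (4*n)), ?_⟩
    have hp : ((p.a.val : ℕ) : ZMod (4*n)) = p.a := by rw [ZMod.natCast_val, ZMod.cast_id]
    rw [← hp, hm]
    push_cast
    ring
  · rintro ⟨c, hc⟩
    rw [hc, map_mul, map_ofNat, show (2 : ZMod 2) = 0 from rfl, zero_mul]

lemma K_index (n : ℕ) (hn : 2 ≤ n) : (K n).index = 2 := by
  rw [← ker_pr n hn, Subgroup.index_ker, MonoidHom.range_eq_top.mpr (pr_surj n),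
    Subgroup.card_top, Nat.card_congr Multiplicative.toAdd, Nat.card_zmod]

set_option maxHeartbeats 1000000 in
lemma closure_eq (n : ℕ) (hn : 2 ≤ n) :
    Subgroup.closure {x n ^ 2, y n} = (K n).comap (phi n hn) := by
  haveI : NeZero (4*n) := ⟨by omega⟩
  apply le_antisymm
  · rw [Subgroup.closure_le]
    rintro g (rfl | rfl)
    · show phi n hn (x n ^ 2) ∈ K n
      rw [map_pow, phi_x, QD.X_pow]
      exact ⟨1, by push_cast; ring⟩
    · show phi n hn (y n) ∈ K n
      rw [phi_y]
      exact ⟨0, by simp⟩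
  · intro g hg
    obtain ⟨c, hc⟩ := hg
    have hg' : g = x n ^ ((phi n hn g).a.val) * y n ^ ((phi n hn g).b.val) := by
      rw [← psi_apply n hn, psi_phi n hn g]
    have h2 : 2 ∣ ((phi n hn g).a).val := by
      have h : (phi n hn g).a = ((2*c.val : ℕ) : ZMod (4*n)) := by
        rw [hc]; push_cast [ZMod.natCast_val, ZMod.cast_id]; ring
      rw [h, ZMod.val_natCast]
      exact (Nat.dvd_mod_iff (two_dvd_4n n)).mpr ⟨c.val, rfl⟩
    obtain ⟨m, hm⟩ := h2
    have hx2 : x n ^ ((phi n hn g).a.val) = (x n ^ 2)^m := by rw [hm, pow_mul]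
    rw [hg', hx2]
    have m1 : x n ^ 2 ∈ ({x n ^ 2, y n} : Set (G n)) := Set.mem_insert _ _
    have m2 : y n ∈ ({x n ^ 2, y n} : Set (G n)) := Set.mem_insert_of_mem _ rfl
    exact Subgroup.mul_mem _ (Subgroup.pow_mem _ (Subgroup.subset_closure m1) m)
      (Subgroup.pow_mem _ (Subgroup.subset_closure m2) _)

lemma phi_inj (n : ℕ) (hn : 2 ≤ n) : Function.Injective (phi n hn) := by
  intro a b hab
  rw [← psi_phi n hn a, ← psi_phi n hn b, hab]

lemma phi_surj (n : ℕ) (hn : 2 ≤ n) : Function.Surjective (phi n hn) :=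
  fun p => ⟨psi n hn p, phi_psi n hn p⟩

lemma closure_index (n : ℕ) (hn : 2 ≤ n) :
    (Subgroup.closure {x n ^ 2, y n}).index = 2 := by
  rw [closure_eq n hn, Subgroup.index_comap_of_surjective _ (phi_surj n hn), K_index n hn]

lemma invol_mem (n : ℕ) (hn : 2 ≤ n) (g : G n) (h : orderOf g = 2) :
    g ∈ Subgroup.closure {x n ^ 2, y n} := by
  haveI : NeZero (4*n) := ⟨by omega⟩
  rw [closure_eq n hn]
  show phi n hn g ∈ K n
  set p := phi n hn g with hp
  have hg2 : g^2 = 1 := by rw [← h]; exact pow_orderOf_eq_one g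
  have hp2 : p^2 = 1 := by rw [hp, ← map_pow, hg2, map_one]
  have ha : p.a + u n p.b * p.a = 0 := by
    have h' := congrArg QD.a hp2
    rw [pow_two] at h'
    simpa using h'
  have hval : ((p.a.val : ℕ) : ZMod (4*n)) = p.a := by rw [ZMod.natCast_val, ZMod.cast_id]
  rcases zmod2_cases p.b with hb | hb
  · rw [hb, u_zero, one_mul] at ha
    have h0 : ((2*p.a.val : ℕ) : ZMod (4*n)) = 0 := by
      push_cast [ZMod.natCast_val, ZMod.cast_id]
      linear_combination ha
    obtain ⟨k, hk⟩ := (ZMod.natCast_eq_zero_iff _ _).mp h0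
    refine ⟨((n*k : ℕ) : ZMod (4*n)), ?_⟩
    have hv : p.a.val = 2*(n*k) := by
      have hk' : 2*p.a.val = 2*(2*(n*k)) := by rw [hk]; ring
      omega
    rw [← hval, hv]
    push_cast
    ring
  · rw [hb, u_one] at ha
    have h0 : ((2*n*p.a.val : ℕ) : ZMod (4*n)) = 0 := by
      push_cast [ZMod.natCast_val, ZMod.cast_id]
      linear_combination ha
    obtain ⟨k, hk⟩ := (ZMod.natCast_eq_zero_iff _ _).mp h0
    have hv : p.a.val = 2*k := by
      have h2n : 0 < 2*n := by omega
      have : 2*n*p.a.val = 2*n*(2*k) := by rw [hk]; ring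
      exact Nat.eq_of_mul_eq_mul_left h2n this
    refine ⟨((k : ℕ) : ZMod (4*n)), ?_⟩
    rw [← hval, hv]
    push_cast
    ring

end QDAux

namespace QDAux

def fh (n : ℕ) : ZMod (2*n) →+ ZMod (4*n) :=
  ZMod.lift (2*n) ⟨zmultiplesHom (ZMod (4*n)) 2, by
    show ((2*n : ℕ) : ℤ) • (2 : ZMod (4*n)) = 0
    rw [zsmul_eq_mul]
    push_cast
    linear_combination h4n n⟩

lemma fh_natCast (n : ℕ) (k : ℕ) : fh n ((k : ℕ) : ZMod (2*n)) = 2 * ((k : ℕ) : ZMod (4*n)) := by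
  have h : ((k:ℕ) : ZMod (2*n)) = ((k:ℤ) : ZMod (2*n)) := by push_cast; rfl
  rw [h]
  rw [show fh n ((k:ℤ) : ZMod (2*n)) = (zmultiplesHom (ZMod (4*n)) 2) (k:ℤ) from
    ZMod.lift_coe _ _ _]
  show ((k:ℤ)) • (2 : ZMod (4*n)) = 2 * (k : ZMod (4*n))
  rw [zsmul_eq_mul]
  push_cast
  ring

lemma fh_apply (n : ℕ) [NeZero (2*n)] (i : ZMod (2*n)) :
    fh n i = 2 * ((i.val : ℕ) : ZMod (4*n)) := by
  conv_lhs => rw [show i = ((i.val : ℕ) : ZMod (2*n)) from by rw [ZMod.natCast_val, ZMod.cast_id]]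
  rw [fh_natCast]

lemma u_one_mul_two (n : ℕ) (c : ZMod (4*n)) :
    (2*(n:ZMod (4*n)) - 1) * (2*c) = -(2*c) := by
  linear_combination c * h4n n

lemma u_one_fh (n : ℕ) [NeZero (2*n)] (j : ZMod (2*n)) :
    u n 1 * fh n j = -(fh n j) := by
  rw [u_one, fh_apply]
  exact u_one_mul_two n _

def thF (n : ℕ) : DihedralGroup (2*n) → QD n
  | .r i => ⟨-(fh n i), 0⟩
  | .sr i => ⟨fh n i, 1⟩

@[simp] lemma thF_r_a (n : ℕ) (i : ZMod (2*n)) : (thF n (.r i)).a = -(fh n i) := rfl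
@[simp] lemma thF_r_b (n : ℕ) (i : ZMod (2*n)) : (thF n (.r i)).b = 0 := rfl
@[simp] lemma thF_sr_a (n : ℕ) (i : ZMod (2*n)) : (thF n (.sr i)).a = fh n i := rfl
@[simp] lemma thF_sr_b (n : ℕ) (i : ZMod (2*n)) : (thF n (.sr i)).b = 1 := rfl

lemma thF_mul (n : ℕ) (hn : 2 ≤ n) (a b : DihedralGroup (2*n)) :
    thF n (a * b) = thF n a * thF n b := by
  haveI : NeZero (2*n) := ⟨by omega⟩
  rcases a with i | i <;> rcases b with j | j
  · rw [DihedralGroup.r_mul_r]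
    ext <;> simp [u_zero, map_add] <;> ring
  · rw [DihedralGroup.r_mul_sr]
    ext <;> simp [u_zero, map_sub] <;> ring
  · rw [DihedralGroup.sr_mul_r]
    ext <;> simp [map_add, u_one_fh] <;> ring
  · rw [DihedralGroup.sr_mul_sr]
    ext <;> simp [map_sub, u_one_fh, zmod2_add_self] <;> ring

def th (n : ℕ) (hn : 2 ≤ n) : DihedralGroup (2*n) →* QD n :=
  MonoidHom.mk' (thF n) (thF_mul n hn)

lemma th_apply (n : ℕ) (hn : 2 ≤ n) (a : DihedralGroup (2*n)) : th n hn a = thF n a := rfl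

lemma fh_inj (n : ℕ) (hn : 2 ≤ n) : Function.Injective (fh n) := by
  haveI : NeZero (2*n) := ⟨by omega⟩
  intro i j h
  have h2 : ((2*i.val : ℕ) : ZMod (4*n)) = ((2*j.val : ℕ) : ZMod (4*n)) := by
    push_cast
    rw [← fh_apply n i, ← fh_apply n j, h]
  have hmod := (ZMod.natCast_eq_natCast_iff _ _ _).mp h2
  have hi : 2*i.val < 4*n := by have := ZMod.val_lt i; omega
  have hj : 2*j.val < 4*n := by have := ZMod.val_lt j; omega
  have heq : 2*i.val = 2*j.val := by
    have h' := hmod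
    unfold Nat.ModEq at h'
    rwa [Nat.mod_eq_of_lt hi, Nat.mod_eq_of_lt hj] at h'
  exact ZMod.val_injective _ (by omega)

lemma th_inj (n : ℕ) (hn : 2 ≤ n) : Function.Injective (th n hn) := by
  intro a b h
  rw [th_apply, th_apply] at h
  have ha := congrArg QD.a h
  have hb := congrArg QD.b h
  rcases a with i | i <;> rcases b with j | j
  · simp only [thF_r_a] at ha
    exact congrArg _ (fh_inj n hn (neg_inj.mp ha))
  · simp only [thF_r_b, thF_sr_b] at hb
    exact absurd hb (by decide)
  · simp only [thF_r_b, thF_sr_b] at hb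
    exact absurd hb (by decide)
  · simp only [thF_sr_a] at ha
    exact congrArg _ (fh_inj n hn ha)

lemma th_range (n : ℕ) (hn : 2 ≤ n) : (th n hn).range = K n := by
  haveI : NeZero (2*n) := ⟨by omega⟩
  haveI : NeZero (4*n) := ⟨by omega⟩
  apply le_antisymm
  · rintro p ⟨(i | i), rfl⟩
    · exact ⟨-((i.val : ℕ) : ZMod (4*n)), by rw [th_apply, thF_r_a, fh_apply]; ring⟩
    · exact ⟨((i.val : ℕ) : ZMod (4*n)), by rw [th_apply, thF_sr_a, fh_apply]⟩
  · rintro ⟨a, b⟩ ⟨c, hc⟩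
    have hc' : a = 2 * c := hc
    rcases zmod2_cases b with rfl | rfl
    · refine ⟨.r (-((c.val : ℕ) : ZMod (2*n))), ?_⟩
      rw [th_apply]
      ext
      · rw [thF_r_a, map_neg, neg_neg, fh_natCast, ZMod.natCast_val, ZMod.cast_id, hc']
      · rw [thF_r_b]
    · refine ⟨.sr ((c.val : ℕ) : ZMod (2*n)), ?_⟩
      rw [th_apply]
      ext
      · rw [thF_sr_a, fh_natCast, ZMod.natCast_val, ZMod.cast_id, hc']
      · rw [thF_sr_b]

end QDAux

namespace QDAux

lemma hmap (n : ℕ) (hn : 2 ≤ n) :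
    Subgroup.map ((eqv n hn) : G n →* QD n) (Subgroup.closure {x n ^ 2, y n})
      = (th n hn).range := by
  rw [closure_eq n hn]
  have hc : Subgroup.comap (phi n hn) (K n)
      = Subgroup.comap ((eqv n hn) : G n →* QD n) (K n) := rfl
  rw [hc, Subgroup.map_comap_eq_self_of_surjective (by exact phi_surj n hn), th_range n hn]

noncomputable def iso (n : ℕ) (hn : 2 ≤ n) :
    (Subgroup.closure {x n ^ 2, y n} : Subgroup (G n)) ≃* DihedralGroup (2 * n) :=
  ((eqv n hn).subgroupMap (Subgroup.closure {x n ^ 2, y n})).trans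
    ((MulEquiv.subgroupCongr (hmap n hn)).trans
      (MonoidHom.ofInjective (th_inj n hn)).symm)

lemma y_order (n : ℕ) (hn : 2 ≤ n) : orderOf (y n) = 2 := by
  haveI : Fact (Nat.Prime 2) := ⟨Nat.prime_two⟩
  refine orderOf_eq_prime (rely n) ?_
  intro hcon
  have h' := congrArg (phi n hn) hcon
  rw [phi_y, map_one] at h'
  have hb := congrArg QD.b h'
  simp only [Y_b, QD.one_b] at hb
  exact one_ne_zero hb

lemma x2y_order (n : ℕ) (hn : 2 ≤ n) : orderOf (x n ^ 2 * y n) = 2 := by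
  haveI : Fact (Nat.Prime 2) := ⟨Nat.prime_two⟩
  refine orderOf_eq_prime ?_ ?_
  · apply phi_inj n hn
    rw [map_pow, map_mul, map_pow, phi_x, phi_y, map_one, QD.X_pow, pow_two]
    ext
    · simp only [QD.mul_a, QD.mul_b, Y_a, Y_b, u_zero, one_mul, mul_zero, add_zero, zero_add,
        u_one, QD.one_a]
      push_cast
      linear_combination h4n n
    · simp only [QD.mul_b, Y_b, QD.one_b, zero_add]
      exact zmod2_add_self 1
  · intro hcon
    have h' := congrArg (phi n hn) hcon
    rw [map_mul, map_pow, phi_x, phi_y, map_one, QD.X_pow] at h'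
    have hb := congrArg QD.b h'
    simp only [QD.mul_b, Y_b, QD.one_b, zero_add] at hb
    exact one_ne_zero hb

end QDAux


open QDAux in
theorem stmt7 (n : ℕ) (hn : 2 ≤ n) :
    Nonempty ((Subgroup.closure {x n ^ 2, y n} : Subgroup (G n)) ≃* DihedralGroup (2 * n)) ∧
    (Subgroup.closure {x n ^ 2, y n} : Subgroup (G n)).index = 2 ∧
    (∀ g : G n, orderOf g = 2 → g ∈ Subgroup.closure {x n ^ 2, y n}) ∧
    (∀ H : Subgroup (G n), H.index = 2 → (∀ g : G n, orderOf g = 2 → g ∈ H) →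
      H = Subgroup.closure {x n ^ 2, y n}) := by
  refine ⟨⟨iso n hn⟩, closure_index n hn, fun g h => invol_mem n hn g h, ?_⟩
  intro H hH hinv
  have h1 : y n ∈ H := hinv _ (y_order n hn)
  have h2 : x n ^ 2 * y n ∈ H := hinv _ (x2y_order n hn)
  have hx2 : x n ^ 2 ∈ H := by
    have hm := H.mul_mem h2 h1
    rwa [mul_assoc, y_mul_y n, mul_one] at hm
  have hle : Subgroup.closure {x n ^ 2, y n} ≤ H := by
    rw [Subgroup.closure_le]
    rintro g (rfl | rfl)
    · exact hx2
    · exact h1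
  have hrel := Subgroup.relIndex_mul_index hle
  rw [hH, closure_index n hn] at hrel
  have hone : (Subgroup.closure {x n ^ 2, y n}).relIndex H = 1 := by omega
  exact le_antisymm (Subgroup.relIndex_eq_one.mp hone) hle
end

section
/- For n ≥ 2 even, the center of G_n is the cyclic group ⟨x^{2n}⟩ of order 2, while for n ≥ 3 odd, the center of G_n is the cyclic group ⟨x^n⟩ of order 4. -/
namespace QD
variable (n : ℕ)

def uu : ZMod (4*n) := 2*n - 1

lemma key4 : (4 * (n : ZMod (4*n))) = 0 := by
  have := ZMod.natCast_self (4*n)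
  push_cast at this
  linear_combination this

lemma uu_mul_uu : uu n * uu n = 1 := by
  unfold uu
  linear_combination ((n : ZMod (4*n)) - 1) * key4 n

lemma zmod2_cases (e : ZMod 2) : e = 0 ∨ e = 1 := by revert e; decide

def tt : ZMod 2 → ZMod (4*n) := fun e => if e = 0 then 1 else uu n

lemma tt_zero : tt n 0 = 1 := rfl
lemma tt_one : tt n 1 = uu n := rfl

lemma tt_mul (e f : ZMod 2) : tt n (e + f) = tt n e * tt n f := by
  have h2 : (1 + 1 : ZMod 2) = 0 := by decide
  rcases zmod2_cases e with rfl | rfl <;> rcases zmod2_cases f with rfl | rfl <;>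
    simp [tt, uu_mul_uu, h2]

lemma tt_neg (e : ZMod 2) : tt n (-e) = tt n e := by
  rcases zmod2_cases e with rfl | rfl <;> rfl

def HH : Type := ZMod (4*n) × ZMod 2

instance : Mul (HH n) := ⟨fun g h => (g.1 + tt n g.2 * h.1, g.2 + h.2)⟩
instance : One (HH n) := ⟨((0 : ZMod (4*n)), (0 : ZMod 2))⟩
instance : Inv (HH n) := ⟨fun g => (-(tt n g.2 * g.1), -g.2)⟩

lemma mul_def (g h : HH n) : g * h = (g.1 + tt n g.2 * h.1, g.2 + h.2) := rfl
lemma one_def : (1 : HH n) = ((0 : ZMod (4*n)), (0 : ZMod 2)) := rfl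
lemma inv_def (g : HH n) : g⁻¹ = (-(tt n g.2 * g.1), -g.2) := rfl

instance : Group (HH n) where
  mul_assoc a b c := by
    simp only [mul_def, tt_mul]
    exact Prod.ext (by show a.1 + tt n a.2 * b.1 + tt n (a.2 + b.2) * c.1 = a.1 + tt n a.2 * (b.1 + tt n b.2 * c.1); rw [tt_mul]; ring) (by show a.2 + b.2 + c.2 = a.2 + (b.2 + c.2); ring)
  one_mul a := by
    simp only [mul_def, one_def, tt_zero]
    exact Prod.ext (by show (0 : ZMod (4*n)) + tt n 0 * a.1 = a.1; rw [tt_zero]; ring) (by show (0 : ZMod 2) + a.2 = a.2; ring)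
  mul_one a := by
    simp only [mul_def, one_def]
    exact Prod.ext (by show a.1 + tt n a.2 * 0 = a.1; ring) (by show a.2 + 0 = a.2; ring)
  inv_mul_cancel a := by
    simp only [mul_def, inv_def, one_def, tt_neg]
    exact Prod.ext (by show -(tt n a.2 * a.1) + tt n (-a.2) * a.1 = 0; rw [tt_neg]; ring) (by show -a.2 + a.2 = 0; ring)

def xg : HH n := ((1 : ZMod (4*n)), (0 : ZMod 2))
def yg : HH n := ((0 : ZMod (4*n)), (1 : ZMod 2))

lemma xg_pow (k : ℕ) : xg n ^ k = (((k : ZMod (4*n)), (0 : ZMod 2)) : HH n) := by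
  induction k with
  | zero => rw [pow_zero, one_def]; exact Prod.ext (by simp) rfl
  | succ m ih =>
    rw [pow_succ, ih]
    exact Prod.ext (by show (m : ZMod (4*n)) + tt n 0 * 1 = ((m+1 : ℕ) : ZMod (4*n)); rw [tt_zero]; push_cast; ring) (by show (0 : ZMod 2) + 0 = 0; simp)

lemma xg_inv : (xg n)⁻¹ = ((-1 : ZMod (4*n)), (0 : ZMod 2)) := by
  rw [inv_def]; exact Prod.ext (by show -(tt n 0 * 1) = -1; rw [tt_zero]; ring) (by show -(0 : ZMod 2) = 0; simp)

lemma xg_zpow (a : ℤ) : xg n ^ a = ((((a : ℤ) : ZMod (4*n)), (0 : ZMod 2)) : HH n) := by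
  induction a using Int.induction_on with
  | zero => rw [zpow_zero, one_def]; exact Prod.ext (by simp) rfl
  | succ k ih =>
    rw [zpow_add_one, ih]
    refine Prod.ext ?_ (by show (0 : ZMod 2) + 0 = 0; simp)
    show ((k : ℤ) : ZMod (4*n)) + tt n 0 * 1 = (((k : ℤ) + 1 : ℤ) : ZMod (4*n))
    rw [tt_zero]; push_cast; ring
  | pred k ih =>
    rw [zpow_sub_one, ih, xg_inv]
    refine Prod.ext ?_ (by show (0 : ZMod 2) + 0 = 0; simp)
    show ((-k : ℤ) : ZMod (4*n)) + tt n 0 * (-1) = (((-k : ℤ) - 1 : ℤ) : ZMod (4*n))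
    rw [tt_zero]; push_cast; ring


variable (n : ℕ)

def fm : Fin 2 → HH n := fun i => if i = 0 then xg n else yg n

lemma rels_check (hn : 1 ≤ n) :
    ∀ r ∈ qdRel n, FreeGroup.lift (fm n) r = 1 := by
  intro r hr
  have hx : FreeGroup.lift (fm n) (FreeGroup.of (0 : Fin 2)) = xg n := FreeGroup.lift_apply_of
  have hy : FreeGroup.lift (fm n) (FreeGroup.of (1 : Fin 2)) = yg n := FreeGroup.lift_apply_of
  rcases hr with rfl | rfl | rfl
  · rw [map_pow, hx, xg_pow]
    rw [one_def]
    exact Prod.ext (by simp) rfl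
  · rw [map_pow, hy, pow_two, one_def]
    refine Prod.ext ?_ (by show (1 : ZMod 2) + 1 = 0; decide)
    show (0 : ZMod (4*n)) + tt n 1 * 0 = 0
    ring
  · simp only [map_mul, map_inv, map_pow, hx, hy]
    rw [mul_inv_eq_one, xg_pow]
    have h1 : yg n * xg n = ((uu n, 1) : ZMod (4*n) × ZMod 2) := by
      exact Prod.ext (by show (0:ZMod (4*n)) + tt n 1 * 1 = uu n; rw [tt_one]; ring)
        (by show (1 : ZMod 2) + 0 = 1; decide)
    have h2 : yg n * xg n * yg n = ((uu n, 0) : ZMod (4*n) × ZMod 2) := by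
      rw [h1]
      exact Prod.ext (by show uu n + tt n 1 * 0 = uu n; ring) (by show (1 : ZMod 2) + 1 = 0; decide)
    rw [h2]
    refine Prod.ext ?_ rfl
    show uu n = ((2*n-1 : ℕ) : ZMod (4*n))
    have : ((2*n-1 : ℕ) : ZMod (4*n)) = (2*n : ℕ) - 1 := by
      rw [Nat.cast_sub (by omega)]; simp
    rw [this, uu]; push_cast; ring


lemma rel_one {r : FreeGroup (Fin 2)} (hr : r ∈ qdRel n) :
    PresentedGroup.mk (qdRel n) r = 1 :=
  (QuotientGroup.eq_one_iff r).mpr (Subgroup.subset_normalClosure hr)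

lemma hx4n : (x n) ^ (4*n) = 1 := by
  have := rel_one n (show _ ∈ qdRel n from Or.inl rfl)
  rw [map_pow] at this
  exact this

lemma hy2 : y n * y n = 1 := by
  have := rel_one n (show _ ∈ qdRel n from Or.inr (Or.inl rfl))
  rw [map_pow] at this
  rw [← pow_two]
  exact this

lemma hyxy : y n * x n * y n = (x n) ^ (2*n-1) := by
  have := rel_one n (show _ ∈ qdRel n from Or.inr (Or.inr rfl))
  simp only [map_mul, map_inv, map_pow] at this
  rw [mul_inv_eq_one] at this
  exact this

lemma hyinv : (y n)⁻¹ = y n := inv_eq_of_mul_eq_one_right (hy2 n)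

lemma hconj (a : ℤ) : y n * (x n) ^ a * y n = (x n) ^ (((2*n-1 : ℕ) : ℤ) * a) := by
  have h1 : y n * (x n) ^ a * y n = (y n * x n * (y n)⁻¹) ^ a := by
    rw [conj_zpow, hyinv]
  rw [h1, hyinv, hyxy, ← zpow_natCast, ← zpow_mul]

lemma hswap (b : ℤ) : y n * (x n) ^ b = (x n) ^ (((2*n-1 : ℕ) : ℤ) * b) * y n := by
  calc y n * (x n) ^ b = y n * (x n) ^ b * (y n * y n) := by rw [hy2, mul_one]
  _ = (y n * (x n) ^ b * y n) * y n := by rw [← mul_assoc]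
  _ = _ := by rw [hconj]

def φ (hn : 1 ≤ n) : G n →* HH n := PresentedGroup.toGroup (rels_check n hn)

lemma φx (hn : 1 ≤ n) : φ n hn (x n) = xg n := PresentedGroup.toGroup.of _
lemma φy (hn : 1 ≤ n) : φ n hn (y n) = yg n := PresentedGroup.toGroup.of _

lemma φxz (hn : 1 ≤ n) (a : ℤ) :
    φ n hn ((x n) ^ a) = (((a : ZMod (4*n)), (0 : ZMod 2)) : HH n) := by
  rw [map_zpow, φx, xg_zpow]

lemma φxzy (hn : 1 ≤ n) (a : ℤ) :
    φ n hn ((x n) ^ a * y n) = (((a : ZMod (4*n)), (1 : ZMod 2)) : HH n) := by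
  rw [map_mul, φxz, φy]
  refine Prod.ext ?_ (by show (0 : ZMod 2) + 1 = 1; decide)
  show ((a : ZMod (4*n))) + tt n 0 * 0 = (a : ZMod (4*n))
  ring

lemma order_x (hn : 1 ≤ n) : orderOf (x n) = 4*n := by
  haveI : NeZero (4*n) := ⟨by omega⟩
  refine Nat.dvd_antisymm (orderOf_dvd_of_pow_eq_one (hx4n n)) ?_
  have h1 : φ n hn ((x n) ^ (orderOf (x n) : ℤ)) = 1 := by
    rw [zpow_natCast, pow_orderOf_eq_one, map_one]
  rw [φxz, one_def] at h1
  have h2 : ((orderOf (x n) : ℤ) : ZMod (4*n)) = 0 := congrArg Prod.fst h1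
  rw [Int.cast_natCast] at h2
  exact (ZMod.natCast_eq_zero_iff _ _).mp h2

lemma xz_eq_one_iff (hn : 1 ≤ n) (a : ℤ) : (x n) ^ a = 1 ↔ ((4*n : ℕ) : ℤ) ∣ a := by
  rw [← orderOf_dvd_iff_zpow_eq_one, order_x n hn]

lemma xz_ne_xzy (hn : 1 ≤ n) (a b : ℤ) : (x n) ^ a ≠ (x n) ^ b * y n := by
  intro h
  have := congrArg (φ n hn) h
  rw [φxz, φxzy] at this
  have h2 : (0 : ZMod 2) = 1 := congrArg Prod.snd this
  exact absurd h2 (by decide)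

lemma normal_form (g : G n) : ∃ a : ℤ, g = (x n) ^ a ∨ g = (x n) ^ a * y n := by
  let S : Subgroup (G n) :=
  { carrier := {g | ∃ a : ℤ, g = (x n) ^ a ∨ g = (x n) ^ a * y n}
    one_mem' := ⟨0, Or.inl (by simp)⟩
    mul_mem' := by
      rintro g h ⟨a, rfl | rfl⟩ ⟨b, rfl | rfl⟩
      · exact ⟨a + b, Or.inl (by rw [zpow_add])⟩
      · exact ⟨a + b, Or.inr (by rw [zpow_add, mul_assoc])⟩
      · refine ⟨a + ((2*n-1 : ℕ) : ℤ) * b, Or.inr ?_⟩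
        rw [mul_assoc, hswap, ← mul_assoc, ← zpow_add]
      · refine ⟨a + ((2*n-1 : ℕ) : ℤ) * b, Or.inl ?_⟩
        rw [← mul_assoc, mul_assoc ((x n) ^ a), hswap, ← mul_assoc, ← zpow_add,
          mul_assoc, hy2, mul_one]
    inv_mem' := by
      rintro g ⟨a, rfl | rfl⟩
      · exact ⟨-a, Or.inl (by rw [zpow_neg])⟩
      · refine ⟨((2*n-1 : ℕ) : ℤ) * (-a), Or.inr ?_⟩
        have h1 : ((x n) ^ a * y n)⁻¹ = y n * (x n) ^ (-a) := by
          rw [mul_inv_rev, hyinv, zpow_neg]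
        rw [h1, hswap] }
  exact PresentedGroup.generated_by (qdRel n) S
    (by intro j; fin_cases j
        · exact ⟨1, Or.inl (by simp [x]; exact (pow_one _).symm)⟩
        · exact ⟨0, Or.inr (by simp [y]; exact (one_mul _).symm)⟩) g


lemma xz_eq_iff (hn : 1 ≤ n) (a b : ℤ) :
    (x n) ^ a = (x n) ^ b ↔ ((4*n : ℕ) : ℤ) ∣ (a - b) := by
  rw [← xz_eq_one_iff n hn, zpow_sub, mul_inv_eq_one]

lemma x_comm_y_iff (hn : 1 ≤ n) (a : ℤ) :
    Commute ((x n) ^ a) (y n) ↔ ((4*n : ℕ) : ℤ) ∣ (((2*n-1 : ℕ) : ℤ) - 1) * a := by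
  unfold Commute SemiconjBy
  rw [hswap]
  constructor
  · intro h
    have h2 := mul_right_cancel h.symm
    rw [xz_eq_iff n hn] at h2
    have h3 : (((2*n-1 : ℕ) : ℤ) - 1) * a = ((2*n-1 : ℕ) : ℤ) * a - a := by ring
    rw [h3]
    exact h2
  · intro h
    have h2 : (x n) ^ (((2*n-1 : ℕ) : ℤ) * a) = (x n) ^ a := by
      rw [xz_eq_iff n hn]
      have h3 : ((2*n-1 : ℕ) : ℤ) * a - a = (((2*n-1 : ℕ) : ℤ) - 1) * a := by ring
      rw [h3]
      exact h
    rw [h2]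

lemma central_of (g : G n) (hxc : Commute g (x n)) (hyc : Commute g (y n)) :
    g ∈ Subgroup.center (G n) := by
  rw [Subgroup.mem_center_iff]
  intro h
  obtain ⟨a, rfl | rfl⟩ := normal_form n h
  · exact (hxc.zpow_right a).symm
  · exact ((hxc.zpow_right a).mul_right hyc).symm

lemma mem_center_iff (hn : 2 ≤ n) (g : G n) :
    g ∈ Subgroup.center (G n) ↔
      ∃ a : ℤ, ((4*n : ℕ) : ℤ) ∣ ((2*n : ℤ) - 2) * a ∧ g = (x n) ^ a := by
  have hn1 : 1 ≤ n := by omega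
  have hcast : ((2*n-1 : ℕ) : ℤ) - 1 = (2*n : ℤ) - 2 := by
    rw [Nat.cast_sub (by omega)]; push_cast; ring
  constructor
  · intro hg
    obtain ⟨a, rfl | rfl⟩ := normal_form n g
    · refine ⟨a, ?_, rfl⟩
      rw [← hcast, ← x_comm_y_iff n hn1]
      exact Subgroup.mem_center_iff.mp hg (y n) |>.symm
    · exfalso
      have hcom := Subgroup.mem_center_iff.mp hg (x n)
      -- x * (x^a * y) = (x^a * y) * x
      have h1 : x n * ((x n) ^ a * y n) = (x n) ^ (a+1) * y n := by
        rw [← mul_assoc, ← zpow_one_add, add_comm]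
      have h2 : (x n) ^ a * y n * x n = (x n) ^ (a + ((2*n-1 : ℕ) : ℤ)) * y n := by
        calc (x n) ^ a * y n * x n = (x n) ^ a * (y n * (x n) ^ (1:ℤ)) := by
              rw [mul_assoc, zpow_one]
        _ = (x n) ^ a * ((x n) ^ (((2*n-1:ℕ):ℤ) * 1) * y n) := by rw [hswap]
        _ = _ := by rw [mul_one, ← mul_assoc, ← zpow_add]
      rw [h1, h2] at hcom
      have h3 := mul_right_cancel hcom
      rw [xz_eq_iff n hn1] at h3
      have h4 : (a + 1) - (a + ((2*n-1 : ℕ) : ℤ)) = -((2*n : ℤ) - 2) := by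
        rw [Nat.cast_sub (by omega)]; push_cast; ring
      rw [h4, Int.dvd_neg] at h3
      have h5 := Int.le_of_dvd (by push_cast; omega) h3
      push_cast at h5
      omega
  · rintro ⟨a, hdvd, rfl⟩
    refine central_of n _ ((Commute.refl (x n)).zpow_left a) ?_
    rw [x_comm_y_iff n hn1, hcast]
    exact hdvd

lemma x2n_ne_one (hn : 2 ≤ n) : (x n) ^ (2*n) ≠ 1 := by
  intro h
  rw [← zpow_natCast, xz_eq_one_iff n (by omega)] at h
  have := Int.le_of_dvd (by push_cast; omega) h
  push_cast at this
  omega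

lemma xn_ne_one (hn : 2 ≤ n) : (x n) ^ n ≠ 1 := by
  intro h
  rw [← zpow_natCast, xz_eq_one_iff n (by omega)] at h
  have := Int.le_of_dvd (by push_cast; omega) h
  push_cast at this
  omega


end QD

theorem stmt11 (n : ℕ) (hn : 2 ≤ n) :
    (Even n → Subgroup.center (G n) = Subgroup.zpowers (x n ^ (2 * n)) ∧
      Nat.card (Subgroup.center (G n)) = 2) ∧
    (Odd n → Subgroup.center (G n) = Subgroup.zpowers (x n ^ n) ∧
      Nat.card (Subgroup.center (G n)) = 4) := by
  haveI : Fact (Nat.Prime 2) := ⟨Nat.prime_two⟩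
  constructor
  · rintro ⟨m, hm⟩
    have hm1 : 1 ≤ m := by omega
    have hcenter : Subgroup.center (G n) = Subgroup.zpowers (x n ^ (2 * n)) := by
      apply le_antisymm
      · intro g hg
        obtain ⟨a, hdvd, rfl⟩ := (QD.mem_center_iff n hn g).mp hg
        obtain ⟨k, hk⟩ := hdvd
        have hmz : (n : ℤ) = 2 * m := by omega
        have h2 : 2 * (((2*(m:ℤ))-1) * a) = 2 * ((4*(m:ℤ)) * k) := by
          push_cast at hk
          rw [hmz] at hk
          linear_combination hk
        have h2' := mul_left_cancel₀ (two_ne_zero) h2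
        have hco : IsCoprime ((4*(m:ℤ))) ((2*(m:ℤ))-1) := ⟨1-m, 2*m-1, by ring⟩
        have h3 : (4*(m:ℤ)) ∣ a := hco.dvd_of_dvd_mul_left ⟨k, by linarith [h2']⟩
        obtain ⟨j, hj⟩ := h3
        refine Subgroup.mem_zpowers_iff.mpr ⟨j, ?_⟩
        rw [← zpow_natCast, ← zpow_mul]
        congr 1
        rw [hj]
        push_cast [hm]
        ring
      · rw [Subgroup.zpowers_le]
        refine (QD.mem_center_iff n hn _).mpr ⟨((2*n : ℕ) : ℤ), ⟨((n : ℤ) - 1), by push_cast; ring⟩, (zpow_natCast _ _).symm⟩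
    refine ⟨hcenter, ?_⟩
    rw [hcenter, Nat.card_zpowers]
    apply orderOf_eq_prime
    · rw [← pow_mul, show 2*n*2 = 4*n by ring]
      exact QD.hx4n n
    · exact QD.x2n_ne_one n hn
  · rintro ⟨m, hm⟩
    have hm1 : 1 ≤ m := by omega
    have hcenter : Subgroup.center (G n) = Subgroup.zpowers (x n ^ n) := by
      apply le_antisymm
      · intro g hg
        obtain ⟨a, hdvd, rfl⟩ := (QD.mem_center_iff n hn g).mp hg
        obtain ⟨k, hk⟩ := hdvd
        have hmz : (n : ℤ) = 2 * m + 1 := by omega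
        have h2 : 4 * ((m:ℤ) * a) = 4 * ((n:ℤ) * k) := by
          push_cast at hk
          rw [hmz] at hk ⊢
          linear_combination hk
        have h2' := mul_left_cancel₀ (by norm_num : (4:ℤ) ≠ 0) h2
        have hco : IsCoprime ((n:ℤ)) ((m:ℤ)) := ⟨1, -2, by rw [hmz]; ring⟩
        have h3 : (n:ℤ) ∣ a := hco.dvd_of_dvd_mul_left ⟨k, by linarith [h2']⟩
        obtain ⟨j, hj⟩ := h3
        refine Subgroup.mem_zpowers_iff.mpr ⟨j, ?_⟩
        rw [← zpow_natCast, ← zpow_mul]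
        congr 1
        rw [hj]
      · rw [Subgroup.zpowers_le]
        refine (QD.mem_center_iff n hn _).mpr ⟨((n : ℕ) : ℤ), ⟨(m : ℤ), ?_⟩, (zpow_natCast _ _).symm⟩
        push_cast [hm]
        ring
    refine ⟨hcenter, ?_⟩
    rw [hcenter, Nat.card_zpowers]
    have h4 : orderOf (x n ^ n) = 2 ^ 2 := by
      apply orderOf_eq_prime_pow
      · rw [← pow_mul, show n * 2 ^ 1 = 2 * n by ring]
        exact QD.x2n_ne_one n hn
      · rw [← pow_mul, show n * 2 ^ (1+1) = 4 * n by ring]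
        exact QD.hx4n n
    rw [h4]
    norm_num
end

section
/- For n ≥ 2 and for every u ∈ {1, …, 4n-1} with gcd(u, 4n) = 1 and every v ∈ {0, 1, …, 2n-1}, the assignment x ↦ x^u, y ↦ y x^{2v} extends to an automorphism ψ_{u,2v} of G_n; moreover every automorphism of G_n is of this form, so |Aut(G_n)| = φ(4n) · 2n, where φ is the Euler totient function. -/
namespace QDaux

variable (n : ℕ)

lemma mk_rel_one : ∀ r ∈ qdRel n, (PresentedGroup.mk (qdRel n) r : G n) = 1 := by
  intro r hr
  exact (QuotientGroup.eq_one_iff r).mpr (Subgroup.subset_normalClosure hr)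

lemma relx : x n ^ (4 * n) = 1 := by
  have := mk_rel_one n (FreeGroup.of 0 ^ (4 * n)) (by left; rfl)
  rw [map_pow] at this; exact this

lemma rely : y n ^ 2 = 1 := by
  have := mk_rel_one n (FreeGroup.of 1 ^ 2) (by right; left; rfl)
  rw [map_pow] at this; exact this

lemma relyxy : y n * x n * y n = x n ^ (2 * n - 1) := by
  have := mk_rel_one n
    (FreeGroup.of 1 * FreeGroup.of 0 * FreeGroup.of 1 * (FreeGroup.of 0 ^ (2 * n - 1))⁻¹)
    (by right; right; rfl)
  simp only [map_mul, map_pow, map_inv] at this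
  exact mul_inv_eq_one.mp this

end QDaux

namespace QDaux

variable (n : ℕ)

lemma yinv : (y n)⁻¹ = y n := by
  have h := rely n
  rw [pow_two] at h
  exact inv_eq_of_mul_eq_one_right h

lemma ypow_inv (j : ℕ) : (y n ^ j)⁻¹ = y n ^ j := by
  rw [← inv_pow, yinv]

lemma yxy (i : ℕ) : y n * x n ^ i * y n = x n ^ ((2 * n - 1) * i) := by
  have h : y n * x n ^ i * (y n)⁻¹ = (y n * x n * (y n)⁻¹) ^ i := (conj_pow).symm
  rw [yinv] at h
  rw [h, relyxy, ← pow_mul]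

lemma xy (i : ℕ) : x n ^ i * y n = y n * x n ^ ((2 * n - 1) * i) := by
  have h := yxy n i
  calc x n ^ i * y n = (y n * y n) * (x n ^ i * y n) := by
        have := rely n; rw [pow_two] at this; rw [this, one_mul]
    _ = y n * (y n * x n ^ i * y n) := by group
    _ = y n * x n ^ ((2 * n - 1) * i) := by rw [h]

lemma xyk (i k : ℕ) : x n ^ i * y n ^ k = y n ^ k * x n ^ ((2 * n - 1) ^ k * i) := by
  induction k with
  | zero => simp
  | succ k ih =>
    rw [pow_succ, ← mul_assoc, ih, mul_assoc, xy, ← mul_assoc, ← pow_succ]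
    ring_nf

lemma pred_mul (a b : ℕ) (h : 1 ≤ a) : (a - 1) * b + b = a * b := by
  cases a with
  | zero => omega
  | succ a => simp [Nat.succ_sub_one, Nat.succ_mul]

lemma xpow_inv (h : 1 ≤ n) (i : ℕ) : (x n ^ i)⁻¹ = x n ^ ((4 * n - 1) * i) := by
  apply inv_eq_of_mul_eq_one_right
  rw [← pow_add, add_comm, pred_mul _ _ (by omega : 1 ≤ 4 * n), pow_mul,
    relx, one_pow]

lemma xpow_reduce (i : ℕ) : x n ^ i = x n ^ (i % (4 * n)) := by
  conv_lhs => rw [← Nat.div_add_mod i (4 * n)]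
  rw [pow_add, pow_mul, relx, one_pow, one_mul]

lemma ypow_reduce (j : ℕ) : y n ^ j = y n ^ (j % 2) := by
  conv_lhs => rw [← Nat.div_add_mod j 2]
  rw [pow_add, pow_mul, rely, one_pow, one_mul]

/-- Normal form subgroup. -/
def nfSub (h : 1 ≤ n) : Subgroup (G n) where
  carrier := {g | ∃ j i : ℕ, g = y n ^ j * x n ^ i}
  one_mem' := ⟨0, 0, by simp⟩
  mul_mem' := by
    rintro a b ⟨j, i, rfl⟩ ⟨k, l, rfl⟩
    refine ⟨j + k, (2 * n - 1) ^ k * i + l, ?_⟩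
    rw [mul_assoc, ← mul_assoc (x n ^ i), xyk, pow_add, pow_add]
    group
  inv_mem' := by
    rintro a ⟨j, i, rfl⟩
    refine ⟨j, (2 * n - 1) ^ j * ((4 * n - 1) * i), ?_⟩
    rw [mul_inv_rev, xpow_inv n h, ypow_inv, xyk]

lemma nf (h : 1 ≤ n) (g : G n) :
    ∃ j i : ℕ, j < 2 ∧ i < 4 * n ∧ g = y n ^ j * x n ^ i := by
  have hg : ∃ j i : ℕ, g = y n ^ j * x n ^ i := by
    have := PresentedGroup.generated_by (qdRel n) (nfSub n h) ?_ g
    · exact this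
    · intro j
      fin_cases j
      · exact ⟨0, 1, by rw [pow_zero, one_mul, pow_one]; rfl⟩
      · exact ⟨1, 0, by rw [pow_one, pow_zero, mul_one]; rfl⟩
  obtain ⟨j, i, rfl⟩ := hg
  exact ⟨j % 2, i % (4 * n), Nat.mod_lt _ (by omega), Nat.mod_lt _ (by omega),
    by rw [← xpow_reduce, ← ypow_reduce]⟩

end QDaux

namespace QDaux

variable (n : ℕ)

lemma tsq (h : 1 ≤ n) :
    ((2 * n - 1 : ℕ) : ZMod (4 * n)) * ((2 * n - 1 : ℕ) : ZMod (4 * n)) = 1 := by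
  have key : (2 * n - 1) * (2 * n - 1) = 4 * n * (n - 1) + 1 := by
    obtain ⟨m, rfl⟩ : ∃ m, n = m + 1 := ⟨n - 1, by omega⟩
    have h1 : 2 * (m + 1) - 1 = 2 * m + 1 := by omega
    have h2 : m + 1 - 1 = m := by omega
    rw [h1, h2]; ring
  rw [← Nat.cast_mul, key, Nat.cast_add, Nat.cast_mul, ZMod.natCast_self, zero_mul, zero_add,
    Nat.cast_one]

lemma z2aux : ∀ b : ZMod 2, b + 1 + 1 = b := by decide

/-- The model permutation `X`. -/
def pX : Equiv.Perm (ZMod (4 * n) × ZMod 2) :=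
  Equiv.prodCongr (Equiv.addLeft 1) (Equiv.refl _)

/-- The model permutation `Y`. -/
def pY (h : 1 ≤ n) : Equiv.Perm (ZMod (4 * n) × ZMod 2) where
  toFun p := (((2 * n - 1 : ℕ) : ZMod (4 * n)) * p.1, p.2 + 1)
  invFun p := (((2 * n - 1 : ℕ) : ZMod (4 * n)) * p.1, p.2 + 1)
  left_inv p := by simp [← mul_assoc, tsq n h, z2aux]
  right_inv p := by simp [← mul_assoc, tsq n h, z2aux]

lemma pX_pow (k : ℕ) (p : ZMod (4 * n) × ZMod 2) :
    (pX n ^ k) p = (p.1 + (k : ℕ), p.2) := by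
  induction k with
  | zero => simp
  | succ k ih =>
    rw [pow_succ', Equiv.Perm.mul_apply, ih]
    show (1 + (p.1 + (k : ℕ)), p.2) = (p.1 + ((k+1 : ℕ) : ZMod (4*n)), p.2)
    rw [Prod.ext_iff]
    refine ⟨by push_cast; ring, rfl⟩

lemma pY_pow (h : 1 ≤ n) (j : ℕ) (p : ZMod (4 * n) × ZMod 2) :
    (pY n h ^ j) p = (((2 * n - 1 : ℕ) : ZMod (4 * n)) ^ j * p.1, p.2 + (j : ℕ)) := by
  induction j with
  | zero => simp
  | succ j ih =>
    rw [pow_succ', Equiv.Perm.mul_apply, ih]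
    show (((2 * n - 1 : ℕ) : ZMod (4 * n)) * (((2 * n - 1 : ℕ) : ZMod (4 * n)) ^ j * p.1),
        p.2 + (j : ℕ) + 1) =
      (((2 * n - 1 : ℕ) : ZMod (4 * n)) ^ (j+1) * p.1, p.2 + ((j+1 : ℕ) : ZMod 2))
    rw [Prod.ext_iff]
    refine ⟨by rw [pow_succ]; ring, by push_cast; ring⟩

/-- The images of the generators in the permutation model. -/
def pf (h : 1 ≤ n) : Fin 2 → Equiv.Perm (ZMod (4 * n) × ZMod 2) :=
  ![pX n, pY n h]

lemma pf_rel (h : 1 ≤ n) : ∀ r ∈ qdRel n, FreeGroup.lift (pf n h) r = 1 := by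
  have hX : FreeGroup.lift (pf n h) (FreeGroup.of 0) = pX n := by
    rw [FreeGroup.lift_apply_of]; rfl
  have hY : FreeGroup.lift (pf n h) (FreeGroup.of 1) = pY n h := by
    rw [FreeGroup.lift_apply_of]; rfl
  rintro r (rfl | rfl | rfl)
  · rw [map_pow, hX]
    ext p
    · rw [pX_pow]; simp [ZMod.natCast_self]
    · rw [pX_pow]; rfl
  · rw [map_pow, hY]
    ext p
    · show ((pY n h ^ 2) p).1 = p.1
      rw [pY_pow, pow_two, tsq n h, one_mul]
    · show ((pY n h ^ 2) p).2 = p.2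
      rw [pY_pow]
      show p.2 + ((2 : ℕ) : ZMod 2) = p.2
      have h2 : ((2 : ℕ) : ZMod 2) = 0 := by decide
      rw [h2, add_zero]
  · rw [map_mul, map_mul, map_mul, map_inv, map_pow, hX, hY, mul_inv_eq_one]
    ext p
    · show (pY n h ((pX n) ((pY n h) p))).1 = ((pX n ^ (2*n-1)) p).1
      rw [pX_pow]
      show ((2 * n - 1 : ℕ) : ZMod (4 * n)) * (1 + ((2 * n - 1 : ℕ) : ZMod (4 * n)) * p.1) =
        p.1 + ((2*n-1 : ℕ) : ZMod (4*n))
      rw [mul_add, mul_one, ← mul_assoc, tsq n h, one_mul, add_comm]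
    · show ((pY n h) ((pX n) ((pY n h) p))).2 = ((pX n ^ (2*n-1)) p).2
      rw [pX_pow]
      show p.2 + 1 + 1 = p.2
      exact z2aux _

/-- The homomorphism to the permutation model. -/
def pmap (h : 1 ≤ n) : G n →* Equiv.Perm (ZMod (4 * n) × ZMod 2) :=
  PresentedGroup.toGroup (pf_rel n h)

lemma pmap_x (h : 1 ≤ n) : pmap n h (x n) = pX n :=
  PresentedGroup.toGroup.of (pf_rel n h)

lemma pmap_y (h : 1 ≤ n) : pmap n h (y n) = pY n h :=
  PresentedGroup.toGroup.of (pf_rel n h)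

lemma pmap_eval (h : 1 ≤ n) (j i : ℕ) :
    pmap n h (y n ^ j * x n ^ i) ((0 : ZMod (4 * n)), (0 : ZMod 2)) =
      (((2 * n - 1 : ℕ) : ZMod (4 * n)) ^ j * (i : ℕ), ((j : ℕ) : ZMod 2)) := by
  rw [map_mul, map_pow, map_pow, pmap_x, pmap_y, Equiv.Perm.mul_apply, pX_pow, pY_pow]
  simp

end QDaux

namespace QDaux

variable (n : ℕ)

lemma xpow_eq_one_iff (h : 1 ≤ n) (k : ℕ) : x n ^ k = 1 ↔ 4 * n ∣ k := by
  constructor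
  · intro hk
    have := congrArg (fun g => pmap n h g ((0 : ZMod (4 * n)), (0 : ZMod 2))) hk
    simp only [map_one, Equiv.Perm.one_apply] at this
    have h2 : x n ^ k = y n ^ 0 * x n ^ k := by rw [pow_zero, one_mul]
    rw [h2] at this
    rw [pmap_eval n h 0 k] at this
    have h3 : ((k : ℕ) : ZMod (4 * n)) = 0 := by
      have := congrArg Prod.fst this
      simpa using this
    exact (ZMod.natCast_eq_zero_iff k (4 * n)).mp h3
  · rintro ⟨c, rfl⟩
    rw [pow_mul, relx, one_pow]

lemma order_x (h : 1 ≤ n) : orderOf (x n) = 4 * n := by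
  apply Nat.dvd_antisymm
  · exact orderOf_dvd_of_pow_eq_one (relx n)
  · exact (xpow_eq_one_iff n h _).mp (pow_orderOf_eq_one (x n))

lemma xpow_eq_iff (h : 1 ≤ n) (a b : ℕ) : x n ^ a = x n ^ b ↔ a ≡ b [MOD 4 * n] := by
  rw [pow_eq_pow_iff_modEq, order_x n h]

lemma y_ne_xpow (h : 1 ≤ n) (m : ℕ) : y n ≠ x n ^ m := by
  intro hc
  have h1 : y n ^ 1 * x n ^ 0 = y n ^ 0 * x n ^ m := by
    rw [pow_one, pow_zero, pow_zero, mul_one, one_mul]; exact hc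
  have := congrArg (fun g => pmap n h g ((0 : ZMod (4 * n)), (0 : ZMod 2))) h1
  simp only [pmap_eval] at this
  have := congrArg Prod.snd this
  simp only at this
  rw [Nat.cast_one, Nat.cast_zero] at this
  exact one_ne_zero this

lemma qd_finite (h : 1 ≤ n) : Finite (G n) := by
  apply Finite.of_surjective
    (fun p : Fin 2 × Fin (4 * n) => y n ^ (p.1 : ℕ) * x n ^ (p.2 : ℕ))
  intro g
  obtain ⟨j, i, hj, hi, rfl⟩ := nf n h g
  exact ⟨(⟨j, hj⟩, ⟨i, hi⟩), rfl⟩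

/-- Two homomorphisms agreeing on the generators agree. -/
lemma mulEquiv_ext (h : 1 ≤ n) (ψ₁ ψ₂ : G n ≃* G n)
    (hx : ψ₁ (x n) = ψ₂ (x n)) (hy : ψ₁ (y n) = ψ₂ (y n)) : ψ₁ = ψ₂ := by
  apply MulEquiv.ext
  intro g
  obtain ⟨j, i, _, _, rfl⟩ := nf n h g
  rw [map_mul, map_mul, map_pow, map_pow, map_pow, map_pow, hx, hy]

end QDaux

namespace QDaux

variable (n : ℕ)

lemma yx2 (a : ℕ) : (y n * x n ^ a) * (y n * x n ^ a) = x n ^ ((2 * n - 1) * a + a) := by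
  calc (y n * x n ^ a) * (y n * x n ^ a) = y n * ((x n ^ a * y n) * x n ^ a) := by group
    _ = y n * ((y n * x n ^ ((2 * n - 1) * a)) * x n ^ a) := by rw [xy]
    _ = (y n * y n) * (x n ^ ((2 * n - 1) * a) * x n ^ a) := by group
    _ = x n ^ ((2 * n - 1) * a + a) := by
        rw [← pow_two, rely, one_mul, pow_add]

lemma key_id (h1 : 1 ≤ n) (v : ℕ) : (2 * n - 1) * (2 * v) + 2 * v = 4 * n * v := by
  obtain ⟨m, rfl⟩ : ∃ m, n = m + 1 := ⟨n - 1, by omega⟩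
  have e : 2 * (m + 1) - 1 = 2 * m + 1 := by omega
  rw [e]; ring

lemma key_id2 (h1 : 1 ≤ n) (v u : ℕ) :
    (2 * n - 1) * (2 * v + u) + 2 * v = u * (2 * n - 1) + 4 * n * v := by
  obtain ⟨m, rfl⟩ : ∃ m, n = m + 1 := ⟨n - 1, by omega⟩
  have e : 2 * (m + 1) - 1 = 2 * m + 1 := by omega
  rw [e]; ring

lemma key_id3 (h1 : 1 ≤ n) (i : ℕ) : (2 * n - 1) * i + i = 2 * n * i := by
  obtain ⟨m, rfl⟩ : ∃ m, n = m + 1 := ⟨n - 1, by omega⟩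
  have e : 2 * (m + 1) - 1 = 2 * m + 1 := by omega
  rw [e]; ring

lemma part1 (h2 : 2 ≤ n) (u v : ℕ) (hu1 : 1 ≤ u) (hu2 : u ≤ 4 * n - 1)
    (hgcd : Nat.gcd u (4 * n) = 1) (hv : v ≤ 2 * n - 1) :
    ∃ ψ : G n ≃* G n, ψ (x n) = x n ^ u ∧ ψ (y n) = y n * x n ^ (2 * v) := by
  have h1 : 1 ≤ n := by omega
  set tf : Fin 2 → G n := ![x n ^ u, y n * x n ^ (2 * v)] with htf
  have hrel : ∀ r ∈ qdRel n, FreeGroup.lift tf r = 1 := by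
    have hX' : FreeGroup.lift tf (FreeGroup.of 0) = x n ^ u := by
      rw [FreeGroup.lift_apply_of]; simp [htf]
    have hY' : FreeGroup.lift tf (FreeGroup.of 1) = y n * x n ^ (2 * v) := by
      rw [FreeGroup.lift_apply_of]; simp [htf]
    rintro r (rfl | rfl | rfl)
    · rw [map_pow, hX', ← pow_mul, mul_comm u, pow_mul, relx, one_pow]
    · rw [map_pow, hY', pow_two, yx2, key_id n h1, pow_mul, relx, one_pow]
    · rw [map_mul, map_mul, map_mul, map_inv, map_pow, hX', hY', mul_inv_eq_one, ← pow_mul]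
      calc (y n * x n ^ (2 * v)) * x n ^ u * (y n * x n ^ (2 * v))
          = y n * ((x n ^ (2 * v + u) * y n) * x n ^ (2 * v)) := by
            rw [pow_add]; group
        _ = y n * ((y n * x n ^ ((2 * n - 1) * (2 * v + u))) * x n ^ (2 * v)) := by rw [xy]
        _ = (y n * y n) * x n ^ ((2 * n - 1) * (2 * v + u) + 2 * v) := by
            rw [pow_add]; group
        _ = x n ^ (u * (2 * n - 1) + 4 * n * v) := by
            rw [← pow_two, rely, one_mul, key_id2 n h1]
        _ = x n ^ (u * (2 * n - 1)) := by
            rw [pow_add, pow_mul (x n) (4 * n) v, relx, one_pow, mul_one]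
  set ψ0 : G n →* G n := PresentedGroup.toGroup hrel with hψ0
  have hψx : ψ0 (x n) = x n ^ u := PresentedGroup.toGroup.of hrel
  have hψy : ψ0 (y n) = y n * x n ^ (2 * v) := PresentedGroup.toGroup.of hrel
  obtain ⟨u', -, hu'⟩ := Nat.exists_mul_mod_eq_one_of_coprime hgcd (by omega)
  have hmod : u * u' ≡ 1 [MOD 4 * n] := by
    show u * u' % (4 * n) = 1 % (4 * n)
    rw [hu', Nat.mod_eq_of_lt (by omega)]
  have hx_mem : x n ∈ ψ0.range := by
    refine ⟨x n ^ u', ?_⟩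
    rw [map_pow, hψx, ← pow_mul, ← pow_one (x n)]
    exact (xpow_eq_iff n h1 _ _).mpr hmod
  have hy_mem : y n ∈ ψ0.range := by
    refine ⟨y n * x n ^ (u' * (4 * n - 2 * v)), ?_⟩
    rw [map_mul, map_pow, hψx, hψy, ← pow_mul, mul_assoc, ← pow_add]
    have hE : x n ^ (2 * v + u * (u' * (4 * n - 2 * v))) = 1 := by
      rw [← pow_zero (x n)]
      apply (xpow_eq_iff n h1 _ _).mpr
      have e1 : u * (u' * (4 * n - 2 * v)) = (u * u') * (4 * n - 2 * v) := by ring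
      calc 2 * v + u * (u' * (4 * n - 2 * v))
          ≡ 2 * v + 1 * (4 * n - 2 * v) [MOD 4 * n] := by
            exact Nat.ModEq.add_left _ (by rw [e1]; exact hmod.mul_right _)
        _ = 4 * n := by omega
        _ ≡ 0 [MOD 4 * n] := (Nat.modEq_zero_iff_dvd).mpr dvd_rfl
    rw [hE, mul_one]
  have hsurj : Function.Surjective ψ0 := by
    intro g
    obtain ⟨j, i, _, _, rfl⟩ := nf n h1 g
    exact Subgroup.mul_mem _ (Subgroup.pow_mem _ hy_mem j) (Subgroup.pow_mem _ hx_mem i)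
  haveI : Finite (G n) := qd_finite n h1
  have hinj : Function.Injective ψ0 := Finite.injective_iff_surjective.mpr hsurj
  refine ⟨MulEquiv.ofBijective ψ0 ⟨hinj, hsurj⟩, ?_, ?_⟩
  · show ψ0 (x n) = _; exact hψx
  · show ψ0 (y n) = _; exact hψy

end QDaux

namespace QDaux

variable (n : ℕ)

lemma part2 (h2 : 2 ≤ n) (ψ : G n ≃* G n) :
    ∃ u v : ℕ, 1 ≤ u ∧ u ≤ 4 * n - 1 ∧ Nat.gcd u (4 * n) = 1 ∧
      v ≤ 2 * n - 1 ∧ ψ (x n) = x n ^ u ∧ ψ (y n) = y n * x n ^ (2 * v) := by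
  have h1 : 1 ≤ n := by omega
  haveI : Finite (G n) := qd_finite n h1
  have horder : orderOf (ψ (x n)) = 4 * n :=
    (orderOf_injective ψ.toMonoidHom ψ.injective (x n)).trans (order_x n h1)
  obtain ⟨j, i, hj, hi, hxψ⟩ := nf n h1 (ψ (x n))
  have hj0 : j = 0 := by
    by_contra hne
    have hj1 : j = 1 := by omega
    subst hj1
    rw [pow_one] at hxψ
    have h4 : (ψ (x n)) ^ 4 = 1 := by
      have hsq : (ψ (x n)) ^ 2 = x n ^ (2 * n * i) := by
        rw [hxψ, pow_two, yx2, key_id3 n h1]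
      calc (ψ (x n)) ^ 4 = ((ψ (x n)) ^ 2) ^ 2 := by rw [← pow_mul]
        _ = (x n ^ (2 * n * i)) ^ 2 := by rw [hsq]
        _ = 1 := by
            rw [← pow_mul]
            exact (xpow_eq_one_iff n h1 _).mpr ⟨i, by ring⟩
    have hdvd := orderOf_dvd_of_pow_eq_one h4
    rw [horder] at hdvd
    have := Nat.le_of_dvd (by omega) hdvd
    omega
  subst hj0
  rw [pow_zero, one_mul] at hxψ
  have hgcd : Nat.gcd (4 * n) i = 1 := by
    have hp : orderOf (x n ^ i) = 4 * n := by rw [← hxψ, horder]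
    rw [orderOf_pow (x n), order_x n h1] at hp
    have hg : Nat.gcd (4 * n) i ∣ 4 * n := Nat.gcd_dvd_left _ _
    have hc := Nat.div_mul_cancel hg
    rw [hp] at hc
    exact Nat.eq_of_mul_eq_mul_left (by omega : 0 < 4 * n)
      (hc.trans (mul_one (4 * n)).symm)
  have hipos : 1 ≤ i := by
    rcases Nat.eq_zero_or_pos i with rfl | h
    · rw [Nat.gcd_zero_right] at hgcd; omega
    · exact h
  -- analyze ψ y
  obtain ⟨k, m, hk, hm, hyψ⟩ := nf n h1 (ψ (y n))
  have hk1 : k = 1 := by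
    by_contra hne
    have hk0 : k = 0 := by omega
    subst hk0
    rw [pow_zero, one_mul] at hyψ
    obtain ⟨g, hg⟩ := ψ.surjective (y n)
    obtain ⟨c, a, _, _, rfl⟩ := nf n h1 g
    rw [map_mul, map_pow, map_pow, hxψ, hyψ, ← pow_mul, ← pow_mul, ← pow_add] at hg
    exact y_ne_xpow n h1 _ hg.symm
  subst hk1
  rw [pow_one] at hyψ
  have hsq : x n ^ (2 * n * m) = 1 := by
    have : (ψ (y n)) ^ 2 = 1 := by rw [← map_pow, rely, map_one]
    rw [hyψ, pow_two, yx2, key_id3 n h1] at this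
    exact this
  obtain ⟨c, hcm⟩ : 2 ∣ m := by
    obtain ⟨c, hc⟩ := (xpow_eq_one_iff n h1 _).mp hsq
    have : 2 * n * m = 2 * n * (2 * c) := by rw [hc]; ring
    have := Nat.eq_of_mul_eq_mul_left (by omega : 0 < 2 * n) this
    exact ⟨c, this⟩
  refine ⟨i, c, hipos, by omega, by rw [Nat.gcd_comm]; exact hgcd, by omega, hxψ, ?_⟩
  rw [hyψ, hcm]

end QDaux


open QDaux in
theorem stmt12 (n : ℕ) (hn : 2 ≤ n) :
    (∀ u v : ℕ, 1 ≤ u → u ≤ 4 * n - 1 → Nat.gcd u (4 * n) = 1 → v ≤ 2 * n - 1 →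
      ∃ ψ : G n ≃* G n, ψ (x n) = x n ^ u ∧ ψ (y n) = y n * x n ^ (2 * v)) ∧
    (∀ ψ : G n ≃* G n, ∃ u v : ℕ, 1 ≤ u ∧ u ≤ 4 * n - 1 ∧ Nat.gcd u (4 * n) = 1 ∧
      v ≤ 2 * n - 1 ∧ ψ (x n) = x n ^ u ∧ ψ (y n) = y n * x n ^ (2 * v)) ∧
    Nat.card (G n ≃* G n) = Nat.totient (4 * n) * (2 * n) := by
  have h1 : 1 ≤ n := by omega
  haveI : NeZero (4 * n) := ⟨by omega⟩
  haveI : NeZero (2 * n) := ⟨by omega⟩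
  refine ⟨fun u v hu1 hu2 hgcd hv => part1 n hn u v hu1 hu2 hgcd hv,
    fun ψ => part2 n hn ψ, ?_⟩
  -- counting
  haveI := Fact.mk (by omega : 1 < 4 * n)
  have key : ∀ p : (ZMod (4 * n))ˣ × ZMod (2 * n),
      ∃ ψ : G n ≃* G n, ψ (x n) = x n ^ ((p.1 : ZMod (4 * n)).val) ∧
        ψ (y n) = y n * x n ^ (2 * (p.2.val)) := by
    intro p
    apply part1 n hn
    · -- 1 ≤ val
      have hne : (p.1 : ZMod (4 * n)) ≠ 0 := Units.ne_zero p.1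
      have : (p.1 : ZMod (4 * n)).val ≠ 0 := fun hc =>
        hne (((ZMod.val_eq_zero _).mp hc))
      omega
    · have := ZMod.val_lt (p.1 : ZMod (4 * n)); omega
    · exact ZMod.val_coe_unit_coprime p.1
    · have := ZMod.val_lt p.2; omega
  set F : (ZMod (4 * n))ˣ × ZMod (2 * n) → (G n ≃* G n) := fun p => (key p).choose with hF
  have hFspec : ∀ p, (F p) (x n) = x n ^ ((p.1 : ZMod (4 * n)).val) ∧
      (F p) (y n) = y n * x n ^ (2 * (p.2.val)) := fun p => (key p).choose_spec
  have hbij : Function.Bijective F := by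
    constructor
    · rintro ⟨a, b⟩ ⟨c, d⟩ h
      have hx1 := (hFspec (a, b)).1
      have hx2 := (hFspec (c, d)).1
      have hy1 := (hFspec (a, b)).2
      have hy2 := (hFspec (c, d)).2
      rw [h] at hx1 hy1
      have e1 : x n ^ ((a : ZMod (4 * n)).val) = x n ^ ((c : ZMod (4 * n)).val) := by
        rw [← hx1, ← hx2]
      have e2 : x n ^ (2 * b.val) = x n ^ (2 * d.val) :=
        mul_left_cancel ((hy2.symm.trans hy1).symm : y n * _ = y n * _)
      have m1 := (xpow_eq_iff n h1 _ _).mp e1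
      have m2 := (xpow_eq_iff n h1 _ _).mp e2
      have hval1 : (a : ZMod (4 * n)).val = (c : ZMod (4 * n)).val := by
        have := m1
        unfold Nat.ModEq at this
        rwa [Nat.mod_eq_of_lt (ZMod.val_lt _), Nat.mod_eq_of_lt (ZMod.val_lt _)] at this
      have hac : a = c := Units.ext (ZMod.val_injective _ hval1)
      have m2' : b.val ≡ d.val [MOD 2 * n] := by
        apply Nat.ModEq.mul_left_cancel' (c := 2) (by omega)
        have h4 : 2 * (2 * n) = 4 * n := by ring
        rwa [h4]
      have hbd : b = d := by
        apply ZMod.val_injective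
        have := m2'
        unfold Nat.ModEq at this
        rwa [Nat.mod_eq_of_lt (ZMod.val_lt _), Nat.mod_eq_of_lt (ZMod.val_lt _)] at this
      rw [hac, hbd]
    · intro ψ
      obtain ⟨u, v, hu1, hu2, hgcd, hv, hxe, hye⟩ := part2 n hn ψ
      refine ⟨(ZMod.unitOfCoprime u hgcd, (v : ZMod (2 * n))), ?_⟩
      have hu4 : u < 4 * n := by omega
      have hv2 : v < 2 * n := by omega
      apply mulEquiv_ext n h1
      · rw [(hFspec _).1, hxe]
        congr 1
        show ((ZMod.unitOfCoprime u hgcd : ZMod (4 * n))).val = u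
        rw [ZMod.coe_unitOfCoprime, ZMod.val_cast_of_lt hu4]
      · rw [(hFspec _).2, hye]
        have hvv : ((ZMod.unitOfCoprime u hgcd, (v : ZMod (2 * n))).2).val = v :=
          ZMod.val_cast_of_lt hv2
        rw [hvv]
  have hcard := Nat.card_eq_of_bijective F hbij
  rw [← hcard, Nat.card_prod, Nat.card_zmod, Nat.card_eq_fintype_card,
    ZMod.card_units_eq_totient]
end

section
/- For n ≥ 2, in G_n: if n is even then all elements y x^{2s}, s ∈ {0, …, 2n-1}, together with y form a single conjugacy class of size 2n, while if n is odd the elements y and yx^2 lie in distinct conjugacy classes. -/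
lemma rel_one {n : ℕ} {r : FreeGroup (Fin 2)} (hr : r ∈ qdRel n) :
    (PresentedGroup.mk (qdRel n) r : G n) = 1 := by
  have : r ∈ Subgroup.normalClosure (qdRel n) := Subgroup.subset_normalClosure hr
  exact (QuotientGroup.eq_one_iff r).2 this

lemma hx4n (n : ℕ) : x n ^ (4 * n) = 1 := by
  have := rel_one (n := n) (r := FreeGroup.of 0 ^ (4 * n)) (by left; rfl)
  rw [map_pow] at this
  exact this

lemma hy2 (n : ℕ) : y n ^ 2 = 1 := by
  have := rel_one (n := n) (r := FreeGroup.of 1 ^ 2) (by right; left; rfl)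
  rw [map_pow] at this
  exact this

lemma hrel3 (n : ℕ) : y n * x n * y n = x n ^ (2 * n - 1) := by
  have := rel_one (n := n)
    (r := FreeGroup.of 1 * FreeGroup.of 0 * FreeGroup.of 1 * (FreeGroup.of 0 ^ (2 * n - 1))⁻¹)
    (by right; right; rfl)
  simp only [map_mul, map_inv, map_pow] at this
  have := mul_inv_eq_one.mp this
  exact this

lemma hyinv (n : ℕ) : (y n)⁻¹ = y n := by
  have h := hy2 n
  rw [pow_two] at h
  exact inv_eq_of_mul_eq_one_right h

lemma hx4nz (n : ℕ) : x n ^ ((4 * n : ℕ) : ℤ) = 1 := by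
  rw [zpow_natCast]; exact hx4n n

lemma hrel3z (n : ℕ) (hn : 1 ≤ n) : y n * x n * y n = x n ^ ((2 * n - 1 : ℤ)) := by
  have h1 : (1:ℕ) ≤ 2 * n := by omega
  rw [hrel3 n, ← zpow_natCast]
  congr 1
  push_cast [Nat.cast_sub h1]
  ring

lemma hconj (n : ℕ) (hn : 1 ≤ n) (k : ℤ) :
    y n * x n ^ k * y n = x n ^ ((2 * n - 1 : ℤ) * k) := by
  have h : (y n * x n * (y n)⁻¹) ^ k = y n * x n ^ k * y n := by
    rw [hyinv]
    have := map_zpow (MulAut.conj (y n)) (x n) k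
    simpa [MulAut.conj_apply, hyinv] using this.symm
  rw [← h, hyinv, hrel3z n hn, ← zpow_mul]

lemma hxk_y (n : ℕ) (hn : 1 ≤ n) (k : ℤ) :
    x n ^ k * y n = y n * x n ^ ((2 * n - 1 : ℤ) * k) := by
  have := hconj n hn k
  calc x n ^ k * y n = y n * (y n * x n ^ k * y n) := by
        rw [← mul_assoc, ← mul_assoc, ← pow_two, hy2, one_mul]
    _ = y n * x n ^ ((2 * n - 1 : ℤ) * k) := by rw [this]

-- concrete permutation model
lemma csq (n : ℕ) : (2 * (n : ZMod (4*n)) - 1) * (2 * (n : ZMod (4*n)) - 1) = 1 := by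
  have h : ((4 * n : ℕ) : ZMod (4*n)) = 0 := ZMod.natCast_self _
  push_cast at h
  linear_combination ((n : ZMod (4*n)) - 1) * h

def Xp (n : ℕ) : Equiv.Perm (ZMod (4*n) × ZMod 2) :=
  (Equiv.addLeft 1).prodCongr (Equiv.refl _)

lemma Yp_invol (n : ℕ) :
    Function.Involutive (fun p : ZMod (4*n) × ZMod 2 =>
      ((2 * (n : ZMod (4*n)) - 1) * p.1, p.2 + 1)) := by
  intro p
  have h2 : (1 + 1 : ZMod 2) = 0 := rfl
  ext
  · simp [← mul_assoc, csq n]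
  · simp [add_assoc, h2]

def Yp (n : ℕ) : Equiv.Perm (ZMod (4*n) × ZMod 2) := (Yp_invol n).toPerm

lemma Yp_apply (n : ℕ) (p : ZMod (4*n) × ZMod 2) :
    Yp n p = ((2 * (n : ZMod (4*n)) - 1) * p.1, p.2 + 1) := rfl

lemma Xp_pow (n : ℕ) (k : ℕ) (p : ZMod (4*n) × ZMod 2) :
    (Xp n ^ k) p = (p.1 + k, p.2) := by
  induction k generalizing p with
  | zero => simp [Xp]
  | succ k ih =>
      rw [pow_succ, Equiv.Perm.mul_apply, ih]
      have : Xp n p = (1 + p.1, p.2) := rfl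
      rw [this]
      push_cast
      rw [Prod.mk.injEq]
      exact ⟨by ring, rfl⟩

lemma perm_rels (n : ℕ) (hn : 1 ≤ n) :
    ∀ r ∈ qdRel n, FreeGroup.lift (![Xp n, Yp n] : Fin 2 → _) r = 1 := by
  intro r hr
  have key : Yp n * Xp n * Yp n = Xp n ^ (2 * n - 1) := by
    ext p
    · rw [Equiv.Perm.mul_apply, Equiv.Perm.mul_apply, Xp_pow]
      have hx : Xp n (Yp n p) = (1 + (2 * (n : ZMod (4*n)) - 1) * p.1, p.2 + 1) := rfl
      rw [Yp_apply, hx]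
      dsimp only
      have hc : ((2 * n - 1 : ℕ) : ZMod (4*n)) = 2 * (n : ZMod (4*n)) - 1 := by
        have h1 : (1:ℕ) ≤ 2 * n := by omega
        push_cast [Nat.cast_sub h1]; ring
      rw [hc]
      linear_combination (p.1 : ZMod (4*n)) * csq n
    · rw [Equiv.Perm.mul_apply, Equiv.Perm.mul_apply, Xp_pow]
      have hx : Xp n (Yp n p) = (1 + (2 * (n : ZMod (4*n)) - 1) * p.1, p.2 + 1) := rfl
      rw [Yp_apply, hx]
      dsimp only
      have h2 : (1 + 1 : ZMod 2) = 0 := rfl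
      simp [add_assoc, h2]
  rcases hr with rfl | rfl | rfl
  · rw [map_pow, FreeGroup.lift_apply_of]
    ext p
    · rw [Matrix.cons_val_zero, Xp_pow]
      simp [ZMod.natCast_self]
    · rw [Matrix.cons_val_zero, Xp_pow]
      simp
  · rw [map_pow, FreeGroup.lift_apply_of, pow_two]
    ext p <;>
      simp [Equiv.Perm.mul_apply, show (Yp n) ((Yp n) p) = p from Yp_invol n p]
  · simp only [map_mul, map_inv, map_pow, FreeGroup.lift_apply_of, Matrix.cons_val_zero,
      Matrix.cons_val_one, Matrix.head_cons]
    rw [mul_inv_eq_one, ← key]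

noncomputable def pim (n : ℕ) (hn : 1 ≤ n) : G n →* Equiv.Perm (ZMod (4*n) × ZMod 2) :=
  PresentedGroup.toGroup (perm_rels n hn)

lemma pim_x (n : ℕ) (hn : 1 ≤ n) : pim n hn (x n) = Xp n :=
  PresentedGroup.toGroup.of _

lemma xpow_inj (n : ℕ) (hn : 1 ≤ n) {a b : ℕ} (ha : a < 4*n) (hb : b < 4*n)
    (h : x n ^ a = x n ^ b) : a = b := by
  haveI : NeZero (4*n) := ⟨by omega⟩
  have h2 : Xp n ^ a = Xp n ^ b := by
    have := congrArg (pim n hn) h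
    simpa [map_pow, pim_x] using this
  have h3 := congrFun (congrArg (fun e => e.toFun) h2) ((0 : ZMod (4*n)), (0 : ZMod 2))
  simp only [Equiv.toFun_as_coe] at h3
  rw [Xp_pow, Xp_pow] at h3
  have h4 : ((a : ZMod (4*n))) = b := by
    have := congrArg Prod.fst h3
    simpa using this
  have := congrArg ZMod.val h4
  rwa [ZMod.val_natCast_of_lt ha, ZMod.val_natCast_of_lt hb] at this

lemma xzpow_congr (n : ℕ) {a b : ℤ} (h : ((4*n : ℕ) : ℤ) ∣ (a - b)) :
    x n ^ a = x n ^ b := by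
  obtain ⟨c, hc⟩ := h
  have ha : a = b + ((4*n : ℕ) : ℤ) * c := by linarith
  rw [ha, zpow_add, zpow_mul, hx4nz, one_zpow, mul_one]

lemma conjPowAux (n : ℕ) (hn : 1 ≤ n) (m k : ℤ) :
    x n ^ m * (y n * x n ^ k) * x n ^ (-m)
      = y n * x n ^ ((2 * n - 1 : ℤ) * m + k - m) := by
  rw [← mul_assoc, hxk_y n hn m]
  rw [mul_assoc (y n), mul_assoc (y n), ← zpow_add, ← zpow_add]
  congr 1

/-- Elements of the form `y * x^(2k)`. -/
def Tset (n : ℕ) : Set (G n) := {g | ∃ k : ℤ, g = y n * x n ^ (2 * k)}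

lemma conj_x_mem (n : ℕ) (hn : 1 ≤ n) (m : ℤ) {t : G n} (ht : t ∈ Tset n) :
    x n ^ m * t * (x n ^ m)⁻¹ ∈ Tset n := by
  obtain ⟨k, rfl⟩ := ht
  refine ⟨(n - 1 : ℤ) * m + k, ?_⟩
  rw [← zpow_neg, conjPowAux n hn]
  congr 1
  ring

lemma conj_y_mem (n : ℕ) (hn : 1 ≤ n) {t : G n} (ht : t ∈ Tset n) :
    y n * t * (y n)⁻¹ ∈ Tset n := by
  obtain ⟨k, rfl⟩ := ht
  refine ⟨(2 * n - 1 : ℤ) * k, ?_⟩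
  rw [hyinv, ← mul_assoc, ← mul_assoc, ← pow_two, hy2, one_mul, hxk_y n hn]
  congr 1
  ring

/-- The subgroup of elements normalizing `Tset`. -/
def Hsub (n : ℕ) (hn : 1 ≤ n) : Subgroup (G n) where
  carrier := {g | (∀ t ∈ Tset n, g * t * g⁻¹ ∈ Tset n) ∧ (∀ t ∈ Tset n, g⁻¹ * t * g ∈ Tset n)}
  one_mem' := ⟨fun t ht => by simpa using ht, fun t ht => by simpa using ht⟩
  mul_mem' := by
    rintro a b ⟨ha1, ha2⟩ ⟨hb1, hb2⟩
    constructor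
    · intro t ht
      have := ha1 _ (hb1 t ht)
      simpa [mul_assoc] using this
    · intro t ht
      have := hb2 _ (ha2 t ht)
      simpa [mul_assoc] using this
  inv_mem' := by
    rintro a ⟨ha1, ha2⟩
    exact ⟨fun t ht => by simpa using ha2 t ht, fun t ht => by simpa using ha1 t ht⟩

lemma all_mem_Hsub (n : ℕ) (hn : 1 ≤ n) (g : G n) : g ∈ Hsub n hn := by
  refine PresentedGroup.generated_by _ _ (fun j => ?_) g
  fin_cases j
  · constructor
    · intro t ht
      have := conj_x_mem n hn 1 ht
      simp at this; exact this
    · intro t ht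
      have := conj_x_mem n hn (-1) ht
      simp at this; exact this
  · constructor
    · intro t ht
      exact conj_y_mem n hn ht
    · intro t ht
      have := conj_y_mem n hn ht
      rwa [← hyinv n] at this
      
lemma conj_y_sub (n : ℕ) (hn : 1 ≤ n) {h : G n} (hc : IsConj (y n) h) : h ∈ Tset n := by
  obtain ⟨c, hc⟩ := isConj_iff.mp hc
  have hy : y n ∈ Tset n := ⟨0, by simp⟩
  have := (all_mem_Hsub n hn c).1 _ hy
  rwa [hc] at this

lemma z4_rels (n : ℕ) (hodd : Odd n) :
    ∀ r ∈ qdRel n,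
      FreeGroup.lift (![Multiplicative.ofAdd (1 : ZMod 4), 1] : Fin 2 → Multiplicative (ZMod 4)) r
        = 1 := by
  intro r hr
  obtain ⟨m, hm⟩ := hodd
  rcases hr with rfl | rfl | rfl
  · rw [map_pow, FreeGroup.lift_apply_of, Matrix.cons_val_zero]
    have : ((Multiplicative.ofAdd (1 : ZMod 4)) ^ (4*n)) = Multiplicative.ofAdd ((4*n : ℕ) • (1 : ZMod 4)) := by
      rw [ofAdd_nsmul]
    rw [this]
    have h4 : ((4*n : ℕ) • (1 : ZMod 4)) = ((4*n : ℕ) : ZMod 4) := by simp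
    rw [h4, show ((4*n : ℕ) : ZMod 4) = 0 from by
      rw [ZMod.natCast_eq_zero_iff]; exact ⟨n, rfl⟩]
    rfl
  · rw [map_pow, FreeGroup.lift_apply_of]
    simp
  · simp only [map_mul, map_inv, map_pow, FreeGroup.lift_apply_of, Matrix.cons_val_zero,
      Matrix.cons_val_one, Matrix.head_cons, one_mul, mul_one]
    rw [mul_inv_eq_one]
    have hc : (2 * n - 1 : ℕ) = 4 * m + 1 := by omega
    rw [hc, pow_succ, pow_mul]
    have : (Multiplicative.ofAdd (1 : ZMod 4)) ^ 4 = 1 := by decide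
    rw [this, one_pow, one_mul]

lemma Tset_to_S (n : ℕ) (hn : 1 ≤ n) {g : G n} (hg : g ∈ Tset n) :
    ∃ s : ℕ, s < 2 * n ∧ g = y n * x n ^ (2 * s) := by
  obtain ⟨k, rfl⟩ := hg
  have h2n : (0:ℤ) < (2*n : ℤ) := by positivity
  set t := k % (2*n : ℤ) with htdef
  have ht0 : 0 ≤ t := Int.emod_nonneg k (by omega)
  have htlt : t < 2*n := Int.emod_lt_of_pos k h2n
  refine ⟨t.toNat, ?_, ?_⟩
  · omega
  · have hcast : ((2 * t.toNat : ℕ) : ℤ) = 2 * t := by push_cast; omega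
    have : x n ^ (2*k) = x n ^ ((2 * t.toNat : ℕ) : ℤ) := by
      apply xzpow_congr
      refine ⟨k / (2*n : ℤ), ?_⟩
      have hq := Int.mul_ediv_add_emod k (2*n : ℤ)
      rw [← htdef] at hq
      have htn : (t.toNat : ℤ) = t := Int.toNat_of_nonneg ht0
      push_cast
      rw [htn]
      linear_combination (-2) * hq
    rw [this, zpow_natCast]

lemma S_conj (n : ℕ) (hn : 2 ≤ n) (heven : Even n) {s : ℕ} (hs : s < 2*n) :
    IsConj (y n) (y n * x n ^ (2*s)) := by
  obtain ⟨m, hm⟩ := heven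
  have hcop2 : IsCoprime ((n:ℤ) - 1) 2 := ⟨-1, m, by
    have : (n:ℤ) = 2*m := by exact_mod_cast by omega
    rw [this]; ring⟩
  have hcopn : IsCoprime ((n:ℤ) - 1) (n:ℤ) := ⟨-1, 1, by ring⟩
  have hcop : IsCoprime ((n:ℤ) - 1) (2 * n) := hcop2.mul_right hcopn
  obtain ⟨u, v, huv⟩ := hcop
  rw [isConj_iff]
  refine ⟨x n ^ ((s:ℤ) * u), ?_⟩
  have h0 : y n = y n * x n ^ (0:ℤ) := by simp
  calc x n ^ ((s:ℤ)*u) * y n * (x n ^ ((s:ℤ)*u))⁻¹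
      = x n ^ ((s:ℤ)*u) * (y n * x n ^ (0:ℤ)) * x n ^ (-((s:ℤ)*u)) := by
        rw [← h0, zpow_neg]
    _ = y n * x n ^ ((2 * n - 1 : ℤ) * ((s:ℤ)*u) + 0 - (s:ℤ)*u) := conjPowAux n (by omega) _ _
    _ = y n * x n ^ (2*s) := by
        congr 1
        have : x n ^ ((2 * n - 1 : ℤ) * ((s:ℤ)*u) + 0 - (s:ℤ)*u) = x n ^ ((2*s : ℕ) : ℤ) := by
          apply xzpow_congr
          refine ⟨-((s:ℤ)*v), ?_⟩
          push_cast
          linear_combination (2*(s:ℤ)) * huv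
        rw [this, zpow_natCast]

theorem stmt13 (n : ℕ) (hn : 2 ≤ n) :
    (Even n →
      {h : G n | IsConj (y n) h} = {g : G n | ∃ s : ℕ, s < 2 * n ∧ g = y n * x n ^ (2 * s)} ∧
      Nat.card {h : G n | IsConj (y n) h} = 2 * n) ∧
    (Odd n → ¬ IsConj (y n) (y n * x n ^ 2)) := by
  have hn1 : 1 ≤ n := by omega
  constructor
  · intro heven
    have hset : {h : G n | IsConj (y n) h}
        = {g : G n | ∃ s : ℕ, s < 2 * n ∧ g = y n * x n ^ (2 * s)} := by
      ext g
      constructor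
      · intro hg
        exact Tset_to_S n hn1 (conj_y_sub n hn1 hg)
      · rintro ⟨s, hs, rfl⟩
        exact S_conj n hn heven hs
    refine ⟨hset, ?_⟩
    rw [hset]
    have hrange : {g : G n | ∃ s : ℕ, s < 2 * n ∧ g = y n * x n ^ (2 * s)}
        = Set.range (fun i : Fin (2*n) => y n * x n ^ (2 * (i : ℕ))) := by
      ext g
      constructor
      · rintro ⟨s, hs, rfl⟩
        exact ⟨⟨s, hs⟩, rfl⟩
      · rintro ⟨i, rfl⟩
        exact ⟨(i : ℕ), i.2, rfl⟩
    rw [hrange]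
    have hinj : Function.Injective (fun i : Fin (2*n) => y n * x n ^ (2 * (i : ℕ))) := by
      intro i j hij
      have h1 : x n ^ (2 * (i : ℕ)) = x n ^ (2 * (j : ℕ)) := mul_left_cancel hij
      have h2 : 2 * (i : ℕ) = 2 * (j : ℕ) :=
        xpow_inj n hn1 (by have := i.2; omega) (by have := j.2; omega) h1
      exact Fin.ext (by omega)
    rw [Nat.card_range_of_injective hinj, Nat.card_eq_fintype_card, Fintype.card_fin]
  · intro hodd hconj
    have hmap := (PresentedGroup.toGroup (z4_rels n hodd)).map_isConj hconj
    rw [isConj_iff_eq] at hmap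
    have hy' : PresentedGroup.toGroup (z4_rels n hodd) (y n) = 1 := by
      have := PresentedGroup.toGroup.of (z4_rels n hodd) (x := (1 : Fin 2))
      simpa [y] using this
    have hx' : PresentedGroup.toGroup (z4_rels n hodd) (x n) = Multiplicative.ofAdd (1 : ZMod 4) := by
      have := PresentedGroup.toGroup.of (z4_rels n hodd) (x := (0 : Fin 2))
      simpa [x] using this
    replace hmap : (1 : Multiplicative (ZMod 4)) = Multiplicative.ofAdd (1 : ZMod 4) ^ 2 := by
      calc (1 : Multiplicative (ZMod 4)) = PresentedGroup.toGroup (z4_rels n hodd) (y n) := hy'.symm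
        _ = PresentedGroup.toGroup (z4_rels n hodd) (y n * x n ^ 2) := hmap
        _ = PresentedGroup.toGroup (z4_rels n hodd) (y n) * PresentedGroup.toGroup (z4_rels n hodd) (x n ^ 2) := map_mul _ _ _
        _ = 1 * Multiplicative.ofAdd (1 : ZMod 4) ^ 2 :=
          congrArg₂ (· * ·) hy' ((map_pow _ _ _).trans (congrArg (· ^ 2) hx'))
        _ = Multiplicative.ofAdd (1 : ZMod 4) ^ 2 := one_mul _
    have : (1 : Multiplicative (ZMod 4)) ≠ Multiplicative.ofAdd (1 : ZMod 4) ^ 2 := by decide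
    exact this hmap
end
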